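/- arXiv:1703.07843 — 8 statements merged into one kernel-verified Lean document; each statement's English description precedes it below -/
import Mathlib

section
/- Let S be a set of points in a finite projective plane of order n such that every point of S lies on at least one line meeting S in exactly t points, where 1 ≤ t ≤ n. Then |S| ≤ (1/2)·n·√(4tn − (3t+1)(t−1)) + (1/2)(t−1)n + t. -/
/-!
Write `i ℓ = #(S ∩ ℓ)`. Counting incidences and pairs of points of `S` gives
`∑ i ℓ = s (n + 1)` and `∑ i ℓ ^ 2 = s (n + s)` over the `n ^ 2 + n + 1` lines. The deviations
`i ℓ - t` vanish on the `c` many `t`-secants, so Cauchy–Schwarz over the other lines bounds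
`(∑ (i ℓ - t)) ^ 2` by `(n ^ 2 + n + 1 - c) ∑ (i ℓ - t) ^ 2`, while the hypothesis gives `s ≤ t c`.
Eliminating `c` leaves `s ^ 2 ≤ ((t - 1) n + 2 t) s + t (n - t) (n ^ 2 + n + 1)`, and the larger
root of this quadratic is the stated bound.
-/

open Configuration

open Finset

theorem sq_sum_le_card_sub_card_mul_sum_sq {ι α : Type*} [Ring α] [LinearOrder α]
    [IsStrictOrderedRing α] {s t : Finset ι} {f : ι → α} (hts : t ⊆ s)
    (hf : ∀ i ∈ t, f i = 0) :
    (∑ i ∈ s, f i) ^ 2 ≤ (#s - #t) * ∑ i ∈ s, f i ^ 2 := by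
  classical
  have hsum : ∀ g : ι → α, (∀ i ∈ t, g i = 0) → ∑ i ∈ s \ t, g i = ∑ i ∈ s, g i := fun g hg =>
    sum_subset sdiff_subset fun i hi hit => hg i (by simpa [hi] using hit)
  rw [← hsum f hf, ← hsum (f · ^ 2) fun i hi => by simp [hf i hi],
    ← Nat.cast_sub (card_le_card hts), ← card_sdiff_of_subset hts]
  exact sq_sum_le_card_mul_sum_sq

theorem le_div_two_add_sqrt_of_sq_le {x b c : ℝ} (h : x ^ 2 ≤ b * x + c) :
    x ≤ (b + √(b ^ 2 + 4 * c)) / 2 := by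
  have hsq : (2 * x - b) ^ 2 ≤ b ^ 2 + 4 * c := by nlinarith
  linarith [le_abs_self (2 * x - b), Real.abs_le_sqrt hsq]

theorem sq_le_of_sq_sum_deviation_le {s n t c : ℝ} (ht : 0 ≤ t) (htn : t ≤ n) (hs : 0 ≤ s)
    (hsc : s ≤ t * c)
    (hD : 0 ≤ s * (n + s) - 2 * t * (s * (n + 1)) + (n ^ 2 + n + 1) * t ^ 2)
    (hCS : (s * (n + 1) - (n ^ 2 + n + 1) * t) ^ 2
      ≤ (n ^ 2 + n + 1 - c) * (s * (n + s) - 2 * t * (s * (n + 1)) + (n ^ 2 + n + 1) * t ^ 2)) :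
    s ^ 2 ≤ ((t - 1) * n + 2 * t) * s + t * (n - t) * (n ^ 2 + n + 1) := by
  have hweighted : s * (s ^ 2 - (((t - 1) * n + 2 * t) * s + t * (n - t) * (n ^ 2 + n + 1)))
      ≤ 0 := by
    -- `c` cancels, and what remains factors as `s` times the quadratic
    linear_combination t * hCS + mul_le_mul_of_nonneg_right hsc hD
  rcases hs.eq_or_lt with rfl | hs
  · have hN : 0 < n ^ 2 + n + 1 := by nlinarith [sq_nonneg (n + 1 / 2)]
    have hnt : 0 ≤ n - t := sub_nonneg.2 htn
    nlinarith [mul_nonneg (mul_nonneg ht hnt) hN.le]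
  · linarith [nonpos_of_mul_nonpos_right hweighted hs]

namespace Configuration.ProjectivePlane

variable {P L : Type*} [Membership P L] [∀ (p : P) (ℓ : L), Decidable (p ∈ ℓ)] [Fintype L]

theorem card_le_mul_card_filter_card_inter_eq {S : Finset P} {t : ℕ}
    (hS : ∀ p ∈ S, ∃ ℓ : L, p ∈ ℓ ∧ #{q ∈ S | q ∈ ℓ} = t) :
    #S ≤ t * #{ℓ : L | #{q ∈ S | q ∈ ℓ} = t} := by
  have hcount := card_nsmul_le_card_nsmul (R := ℕ) (· ∈ ·) (s := S)
    (t := {ℓ : L | #{q ∈ S | q ∈ ℓ} = t}) (m := 1) (n := t)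
    (fun p hp => by
      obtain ⟨ℓ, hpℓ, hℓ⟩ := hS p hp
      exact card_pos.2 ⟨ℓ, by simp [bipartiteAbove, hpℓ, hℓ]⟩)
    (fun ℓ hℓ => (mem_filter.1 hℓ).2.le)
  simpa [mul_comm] using hcount

theorem card_filter_mem_and_mem_of_ne [HasLines P L] {p q : P} (hpq : p ≠ q) :
    #{ℓ : L | p ∈ ℓ ∧ q ∈ ℓ} = 1 := by
  obtain ⟨ℓ, hℓ, huniq⟩ := HasLines.existsUnique_line P L p q hpq
  exact card_eq_one.2 ⟨ℓ, by ext m; simpa using ⟨huniq m, fun h => h ▸ hℓ⟩⟩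

variable [ProjectivePlane P L] [Finite P]

theorem card_filter_mem (p : P) : #{ℓ : L | p ∈ ℓ} = order P L + 1 := by
  rw [← lineCount_eq L p, lineCount, Nat.card_eq_fintype_card, Fintype.card_subtype]

theorem sum_card_filter_mem (S : Finset P) :
    ∑ ℓ : L, #{p ∈ S | p ∈ ℓ} = #S * (order P L + 1) := by
  calc ∑ ℓ : L, #{p ∈ S | p ∈ ℓ} = ∑ p ∈ S, #{ℓ : L | p ∈ ℓ} :=
        (sum_card_bipartiteAbove_eq_sum_card_bipartiteBelow (· ∈ ·)).symm
    _ = #S * (order P L + 1) := sum_const_nat fun p _ => card_filter_mem p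

theorem sum_card_filter_mem_of_mem {S : Finset P} {p : P} (hp : p ∈ S) :
    ∑ ℓ ∈ {ℓ : L | p ∈ ℓ}, #{q ∈ S | q ∈ ℓ} = order P L + #S := by
  classical
  calc ∑ ℓ ∈ {ℓ : L | p ∈ ℓ}, #{q ∈ S | q ∈ ℓ} = ∑ q ∈ S, #{ℓ : L | p ∈ ℓ ∧ q ∈ ℓ} := by
        simp_rw [← filter_filter]
        exact (sum_card_bipartiteAbove_eq_sum_card_bipartiteBelow (· ∈ ·)).symm
    _ = (order P L + 1) + (#S - 1) := by
        rw [← add_sum_erase _ _ hp, sum_const_nat fun q hq =>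
          card_filter_mem_and_mem_of_ne (Ne.symm (ne_of_mem_erase hq)), card_erase_of_mem hp]
        simp [card_filter_mem]
    _ = order P L + #S := by have := card_pos.2 ⟨p, hp⟩; omega

theorem sum_sq_card_filter_mem (S : Finset P) :
    ∑ ℓ : L, #{p ∈ S | p ∈ ℓ} ^ 2 = #S * (order P L + #S) := by
  calc ∑ ℓ : L, #{p ∈ S | p ∈ ℓ} ^ 2 = ∑ ℓ : L, ∑ p ∈ S with p ∈ ℓ, #{q ∈ S | q ∈ ℓ} := by
        simp [sq]
    _ = ∑ p ∈ S, ∑ ℓ ∈ {ℓ : L | p ∈ ℓ}, #{q ∈ S | q ∈ ℓ} :=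
        (sum_sum_bipartiteAbove_eq_sum_sum_bipartiteBelow (· ∈ ·) _).symm
    _ = #S * (order P L + #S) := sum_const_nat fun p hp => sum_card_filter_mem_of_mem hp

theorem sum_card_filter_mem_sub (S : Finset P) (t : ℝ) :
    ∑ ℓ : L, ((#{p ∈ S | p ∈ ℓ} : ℝ) - t)
      = #S * (order P L + 1) - (order P L ^ 2 + order P L + 1) * t := by
  rw [sum_sub_distrib, ← Nat.cast_sum, sum_card_filter_mem, sum_const, card_univ, card_lines P L]
  push_cast
  ring

theorem sum_sq_card_filter_mem_sub (S : Finset P) (t : ℝ) :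
    ∑ ℓ : L, ((#{p ∈ S | p ∈ ℓ} : ℝ) - t) ^ 2
      = #S * (order P L + #S) - 2 * t * (#S * (order P L + 1))
        + (order P L ^ 2 + order P L + 1) * t ^ 2 := by
  have h1 := sum_card_filter_mem_sub (L := L) S 0
  have h2 : ∑ ℓ : L, (#{p ∈ S | p ∈ ℓ} : ℝ) ^ 2 = #S * (order P L + #S) := by
    exact_mod_cast sum_sq_card_filter_mem (L := L) S
  simp only [sub_zero, mul_zero] at h1
  simp only [sub_sq, sum_add_distrib, sum_sub_distrib, ← sum_mul, ← mul_sum, h1, h2, sum_const,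
    card_univ, card_lines P L, nsmul_eq_mul]
  push_cast
  ring

end Configuration.ProjectivePlane

open Configuration.ProjectivePlane

theorem minimal_t_fold_blocking_set_bound_general (P L : Type*) [Membership P L]
    [Fintype P] [Fintype L] [ProjectivePlane P L]
    (n t : ℕ) (hn : ProjectivePlane.order P L = n) (htn : t ≤ n)
    (S : Finset P)
    (hS : ∀ p ∈ S, ∃ ℓ : L, p ∈ ℓ ∧ Nat.card {q : P // q ∈ S ∧ q ∈ ℓ} = t) :
    (S.card : ℝ) ≤ (1 / 2) * n * Real.sqrt (4 * t * n - (3 * (t : ℝ) + 1) * ((t : ℝ) - 1))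
        + (1 / 2) * ((t : ℝ) - 1) * n + t := by
  classical
  have hsecant : ∀ p ∈ S, ∃ ℓ : L, p ∈ ℓ ∧ #{q ∈ S | q ∈ ℓ} = t := by
    intro p hp
    obtain ⟨ℓ, hpℓ, hℓ⟩ := hS p hp
    refine ⟨ℓ, hpℓ, ?_⟩
    rw [← hℓ, ← Nat.card_eq_finsetCard]
    exact Nat.card_congr (Equiv.subtypeEquivRight fun _ => mem_filter)
  set T : Finset L := {ℓ : L | #{q ∈ S | q ∈ ℓ} = t}
  have hcover : (#S : ℝ) ≤ t * #T := by
    exact_mod_cast card_le_mul_card_filter_card_inter_eq hsecant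
  have hCS := sq_sum_le_card_sub_card_mul_sum_sq (subset_univ T)
    (f := fun ℓ => (#{q ∈ S | q ∈ ℓ} : ℝ) - t) fun ℓ hℓ => by simp [(mem_filter.1 hℓ).2]
  have hD := sum_nonneg fun (ℓ : L) (_ : ℓ ∈ univ) => sq_nonneg ((#{q ∈ S | q ∈ ℓ} : ℝ) - t)
  rw [sum_card_filter_mem_sub, sum_sq_card_filter_mem_sub, card_univ, card_lines P L, hn] at hCS
  rw [sum_sq_card_filter_mem_sub, hn] at hD
  push_cast at hCS
  have hquad := sq_le_of_sq_sum_deviation_le (Nat.cast_nonneg t) (Nat.cast_le.2 htn)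
    (Nat.cast_nonneg #S) hcover hD hCS
  have hdisc : ((t - 1) * n + 2 * t : ℝ) ^ 2 + 4 * (t * (n - t) * (n ^ 2 + n + 1))
      = (n : ℝ) ^ 2 * (4 * t * n - (3 * t + 1) * (t - 1)) := by ring
  calc (#S : ℝ) ≤ _ := le_div_two_add_sqrt_of_sq_le hquad
    _ = _ := by
      rw [hdisc, Real.sqrt_mul (sq_nonneg _), Real.sqrt_sq (Nat.cast_nonneg n)]
      ring

theorem minimal_t_fold_blocking_set_bound (P L : Type*) [Membership P L]
    [Fintype P] [Fintype L] [ProjectivePlane P L]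
    (n t : ℕ) (hn : ProjectivePlane.order P L = n) (ht : 1 ≤ t) (htn : t ≤ n)
    (S : Finset P)
    (hS : ∀ p ∈ S, ∃ ℓ : L, p ∈ ℓ ∧ Nat.card {q : P // q ∈ S ∧ q ∈ ℓ} = t) :
    (S.card : ℝ) ≤ (1 / 2) * n * Real.sqrt (4 * t * n - (3 * (t : ℝ) + 1) * ((t : ℝ) - 1))
        + (1 / 2) * ((t : ℝ) - 1) * n + t :=
  minimal_t_fold_blocking_set_bound_general P L n t hn htn S hS
end

section
/- Let p be a prime and h, l nonnegative integers with l ≤ h, and let α be a positive integer coprime to p with α dividing p^h − 1. If 0 < l < h then the equation p^h(p^h + α·p^l − 1) − α·p^l + α²·p^{2l} = α·p^l·q has no solution with q a power of p. -/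
/-- Case I of the equality analysis: `0 < l < h` is impossible. -/
theorem equality_case_I (p h l α : ℕ) (hp : p.Prime)
    (hl : 0 < l) (hlh : l < h) (hα : 0 < α) (hcop : Nat.Coprime α p)
    (hdvd : α ∣ p ^ h - 1) :
    ¬ ∃ k : ℕ, (p : ℤ) ^ h * ((p : ℤ) ^ h + (α : ℤ) * p ^ l - 1)
        - (α : ℤ) * p ^ l + (α : ℤ) ^ 2 * p ^ (2 * l) = (α : ℤ) * p ^ l * p ^ k := by
  rintro ⟨k, hk⟩
  have hp2 : (2 : ℤ) ≤ (p : ℤ) := by exact_mod_cast hp.two_le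
  have hppos : (0 : ℤ) < (p : ℤ) := by linarith
  rcases Nat.eq_zero_or_pos k with hk0 | hk1
  · -- k = 0 : size argument
    subst hk0
    have hαle : (α : ℤ) ≤ (p : ℤ) ^ h - 1 := by
      have h1 : 1 ≤ p ^ h := Nat.one_le_pow _ _ hp.pos
      have := Nat.le_of_dvd (by
        have : 2 ≤ p ^ h := by
          calc 2 ≤ p := hp.two_le
          _ ≤ p ^ h := Nat.le_self_pow (by omega) p
        omega) hdvd
      have : (α : ℤ) ≤ ((p ^ h - 1 : ℕ) : ℤ) := by exact_mod_cast this
      rw [Nat.cast_sub h1] at this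
      push_cast at this
      linarith
    have hα1 : (1 : ℤ) ≤ (α : ℤ) := by exact_mod_cast hα
    have hBl : (2 : ℤ) ≤ (p : ℤ) ^ l := by
      calc (2:ℤ) ≤ (p:ℤ) := hp2
      _ ≤ (p:ℤ) ^ l := le_self_pow₀ (by linarith) (by omega)
    have hAB : (p : ℤ) ^ l * (p : ℤ) ≤ (p : ℤ) ^ h := by
      have : (p:ℤ) ^ (l + 1) ≤ (p:ℤ) ^ h := pow_le_pow_right₀ (by linarith) (by omega)
      rwa [pow_succ] at this
    have h2l : (p : ℤ) ^ (2 * l) = (p:ℤ)^l * (p:ℤ)^l := by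
      rw [two_mul, pow_add]
    rw [h2l, pow_zero, mul_one] at hk
    set A := (p:ℤ)^h with hA
    set B := (p:ℤ)^l with hB
    have hA2B : 2 * B ≤ A := by
      calc 2 * B = B * 2 := by ring
      _ ≤ B * (p:ℤ) := by nlinarith
      _ ≤ A := hAB
    have hABnn : (0:ℤ) ≤ (α:ℤ) * B := by positivity
    have e2 : (α:ℤ) * B * (2 * B) ≤ (α:ℤ) * B * A :=
      mul_le_mul_of_nonneg_left hA2B hABnn
    have e3 : (α:ℤ) * B * 2 ≤ (α:ℤ) * B * B := by nlinarith
    have e4 : A ≤ A * A := by nlinarith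
    have e5 : (0:ℤ) < (α:ℤ)^2 * (B * B) := by positivity
    nlinarith [hk, e2, e3, e4, e5]
  · -- k ≥ 1 : divisibility
    have h1 : (p:ℤ)^(l+1) ∣ (p:ℤ)^h := pow_dvd_pow _ (by omega)
    have h2 : (p:ℤ)^(l+1) ∣ (p:ℤ)^(2*l) := pow_dvd_pow _ (by omega)
    have h3 : (p:ℤ)^(l+1) ∣ (p:ℤ)^(l+k) := pow_dvd_pow _ (by omega)
    have heq : (α : ℤ) * p ^ l =
        (p:ℤ)^h * ((p : ℤ) ^ h + (α : ℤ) * p ^ l - 1) + (α:ℤ)^2 * p^(2*l)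
          - (α:ℤ) * p^(l+k) := by
      rw [pow_add]; ring_nf; ring_nf at hk; linarith
    have hd : (p:ℤ)^(l+1) ∣ (α:ℤ) * (p:ℤ)^l := by
      rw [heq]
      exact dvd_sub (dvd_add (h1.mul_right _) (h2.mul_left _)) (h3.mul_left _)
    have hpdvd : (p:ℤ) ∣ (α:ℤ) := by
      rw [pow_succ, mul_comm ((α:ℤ)) ((p:ℤ)^l)] at hd
      exact (mul_dvd_mul_iff_left (pow_ne_zero l (by linarith : (p:ℤ) ≠ 0))).mp hd
    have : (p : ℕ) ∣ α := by exact_mod_cast hpdvd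
    exact (hp.coprime_iff_not_dvd.mp hcop.symm) this
end

section
/- Let p be a prime, h a positive integer, and α a positive integer coprime to p dividing p^h − 1. If p^h(p^h + α − 1) − α + α² = α·q for some power q of p (the case l = 0, h > 0), then α = 1 and q = p^{2h}. -/
/-- Case III of the equality analysis: `l = 0, h > 0` forces `α = 1` and `q = p^(2h)`. -/
theorem equality_case_III (p h α q : ℕ) (hp : p.Prime) (hh : 0 < h)
    (hα : 0 < α) (hcop : Nat.Coprime α p) (hdvd : α ∣ p ^ h - 1)
    (hq : ∃ k : ℕ, q = p ^ k)
    (heq : (p : ℤ) ^ h * ((p : ℤ) ^ h + (α : ℤ) - 1)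
        - (α : ℤ) + (α : ℤ) ^ 2 = (α : ℤ) * q) :
    α = 1 ∧ q = p ^ (2 * h) := by
  obtain ⟨k, rfl⟩ := hq
  have hp2 : 2 ≤ p := hp.two_le
  have hph : 2 ≤ p ^ h := by
    calc 2 = 2 ^ 1 := rfl
    _ ≤ p ^ h := Nat.pow_le_pow_left hp2 1 |>.trans (Nat.pow_le_pow_right (by omega) hh)
  have hαle : α ≤ p ^ h - 1 := Nat.le_of_dvd (by omega) hdvd
  have hαlt : α < p ^ h := by omega
  -- rewrite the equation
  have heq' : (α : ℤ) * (p : ℤ) ^ k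
      = (p : ℤ) ^ h * (p : ℤ) ^ h + (p : ℤ) ^ h * ((α : ℤ) - 1) + (α : ℤ) * ((α : ℤ) - 1) := by
    push_cast at heq ⊢
    linarith [heq]
  have h1 : (1 : ℤ) ≤ (α : ℤ) := by exact_mod_cast hα
  have hphZ : (0 : ℤ) < (p : ℤ) ^ h := by positivity
  have hge : (p : ℤ) ^ h * (p : ℤ) ^ h ≤ (α : ℤ) * (p : ℤ) ^ k := by
    nlinarith [hphZ, h1]
  have hklt : p ^ h < p ^ k := by
    have : (α : ℤ) * (p : ℤ) ^ h < (α : ℤ) * (p : ℤ) ^ k := by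
      have hαZ : (α : ℤ) < (p : ℤ) ^ h := by exact_mod_cast hαlt
      nlinarith
    have := lt_of_mul_lt_mul_left this (by positivity : (0:ℤ) ≤ (α:ℤ))
    exact_mod_cast this
  have hhk : h < k := (Nat.pow_lt_pow_iff_right hp.one_lt).mp hklt
  have hdvdk : (p : ℤ) ^ h ∣ (p : ℤ) ^ k := pow_dvd_pow _ hhk.le
  have hdvdαα : (p : ℤ) ^ h ∣ (α : ℤ) * ((α : ℤ) - 1) := by
    have : (α : ℤ) * ((α : ℤ) - 1)
        = (α : ℤ) * (p : ℤ) ^ k - (p : ℤ) ^ h * (p : ℤ) ^ h - (p : ℤ) ^ h * ((α : ℤ) - 1) := by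
      linarith [heq']
    rw [this]
    exact dvd_sub (dvd_sub (Dvd.dvd.mul_left hdvdk _) (dvd_mul_right _ _)) (dvd_mul_right _ _)
  -- to ℕ
  have hcast : ((α * (α - 1) : ℕ) : ℤ) = (α : ℤ) * ((α : ℤ) - 1) := by
    push_cast [Nat.cast_sub hα]
    ring
  have hdvdN : p ^ h ∣ α * (α - 1) := by
    have := hdvdαα
    rw [← hcast] at this
    exact_mod_cast this
  have hcop' : Nat.Coprime (p ^ h) α := (Nat.Coprime.pow_left h hcop.symm)
  have hdvd1 : p ^ h ∣ α - 1 := hcop'.dvd_of_dvd_mul_left hdvdN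
  have hα1 : α = 1 := by
    rcases Nat.eq_zero_of_dvd_of_lt hdvd1 (by omega) with h0
    omega
  subst hα1
  refine ⟨rfl, ?_⟩
  have : (p : ℤ) ^ (2 * h) = (p : ℤ) ^ k := by
    rw [two_mul, pow_add]
    push_cast at heq'
    linarith [heq']
  exact_mod_cast this.symm
end

section
/- Let D be a 2-(v, k, λ) design with replication number r = λ(v−1)/(k−1) and b = λv(v−1)/(k(k−1)) blocks. For any set S of points and any set L of blocks, the number i(S,L) of incident (point, block) pairs with point in S and block in L satisfies |i(S,L) − r|S||L|/b| ≤ √(r−λ)·√(|S||L|(1 − |S|/v)(1 − |L|/b)). -/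
/-!
On blocks `β` put `f β = |S ∩ β|` and `g β = 1_L(β)`. Since `∑ f = r|S|`, the deviation to bound
is the covariance `∑ f g - (∑ f)(∑ g)/b`, and Cauchy–Schwarz for the centred vectors bounds it
by `√(Var f · Var g)`. Here `Var g = |L|(1 - |L|/b)`, and double counting gives
`∑ f = r|S|`, `∑ f² = r|S| + λ|S|(|S| - 1)`; the case `S = X` of these identities yields
`bk = vr` and `rk = r + λ(v - 1)`, which turn `Var f` into `(r - λ)|S|(1 - |S|/v)`.
-/

open Finset

namespace Finset

variable {ι : Type*}

/-- `#s` times the empirical covariance of `f` and `g` on `s`. -/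
noncomputable def cov (s : Finset ι) (f g : ι → ℝ) : ℝ :=
  ∑ i ∈ s, f i * g i - (∑ i ∈ s, f i) * (∑ i ∈ s, g i) / #s

variable (s : Finset ι) (f g : ι → ℝ)

theorem cov_eq_sum_mul_sub_mean :
    cov s f g = ∑ i ∈ s, (f i - (∑ j ∈ s, f j) / #s) * (g i - (∑ j ∈ s, g j) / #s) := by
  rcases s.eq_empty_or_nonempty with rfl | hs
  · simp [cov]
  have hs : (#s : ℝ) ≠ 0 := by exact_mod_cast hs.card_pos.ne'
  simp only [cov, sub_mul, mul_sub, sum_sub_distrib, ← sum_mul, ← mul_sum, sum_const,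
    nsmul_eq_mul]
  field_simp
  ring

theorem cov_self_nonneg : 0 ≤ cov s f f := by
  rw [cov_eq_sum_mul_sub_mean]
  exact sum_nonneg fun i _ => mul_self_nonneg _

theorem sq_cov_le : cov s f g ^ 2 ≤ cov s f f * cov s g g := by
  simp only [cov_eq_sum_mul_sub_mean, ← sq]
  exact sum_mul_sq_le_sq_mul_sq ..

theorem abs_cov_le : |cov s f g| ≤ √(cov s f f) * √(cov s g g) := by
  rw [← Real.sqrt_mul (cov_self_nonneg s f)]
  exact Real.abs_le_sqrt (sq_cov_le s f g)

variable {s} {t : Finset ι} [DecidableEq ι]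

theorem cov_ite_mem (ht : t ⊆ s) :
    cov s f (fun i => if i ∈ t then 1 else 0) = ∑ i ∈ t, f i - (∑ i ∈ s, f i) * #t / #s := by
  simp [cov, sum_ite_mem, inter_eq_right.2 ht]

theorem cov_ite_mem_self (ht : t ⊆ s) :
    cov s (fun i => if i ∈ t then 1 else 0) (fun i => if i ∈ t then 1 else 0) =
      #t * (1 - #t / #s) := by
  simp [cov, sum_ite_mem, inter_eq_right.2 ht]
  ring

end Finset

namespace BlockDesign

variable {X B : Type*} [Fintype B] [DecidableEq X] (blk : B → Finset X) {k r lam : ℕ}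

theorem sum_card_inter (S : Finset X) :
    ∑ β, #(S ∩ blk β) = ∑ x ∈ S, #{β | x ∈ blk β} := by
  simp only [← filter_mem_eq_inter, card_filter]
  exact sum_comm

theorem sum_card_inter_sq (S : Finset X) :
    ∑ β, #(S ∩ blk β) ^ 2 = ∑ x ∈ S, ∑ y ∈ S, #{β | x ∈ blk β ∧ y ∈ blk β} := by
  simp only [← filter_mem_eq_inter, card_filter, sq, sum_mul_sum, ite_zero_mul_ite_zero, mul_one]
  rw [sum_comm]
  exact sum_congr rfl fun x _ => sum_comm

theorem sum_card_inter_eq (hr : ∀ x, #{β | x ∈ blk β} = r) (S : Finset X) :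
    ∑ β, (#(S ∩ blk β) : ℝ) = #S * r := by
  rw_mod_cast [sum_card_inter]
  simp [hr]

theorem sum_card_inter_sq_eq (hr : ∀ x, #{β | x ∈ blk β} = r)
    (hlam : ∀ x y, x ≠ y → #{β | x ∈ blk β ∧ y ∈ blk β} = lam) (S : Finset X) :
    ∑ β, (#(S ∩ blk β) : ℝ) ^ 2 = #S * r + (#S ^ 2 - #S) * lam := by
  have row : ∀ x ∈ S, ∑ y ∈ S, (#{β | x ∈ blk β ∧ y ∈ blk β} : ℝ) = r + (#S - 1) * lam := by
    intro x hx
    rw [← add_sum_erase _ _ hx,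
      sum_congr rfl fun y hy => by rw [hlam x y (ne_of_mem_erase hy).symm], sum_const,
      nsmul_eq_mul, card_erase_of_mem hx, Nat.cast_pred (card_pos.2 ⟨x, hx⟩)]
    simp [hr]
  calc ∑ β, (#(S ∩ blk β) : ℝ) ^ 2
      = ∑ x ∈ S, ∑ y ∈ S, (#{β | x ∈ blk β ∧ y ∈ blk β} : ℝ) := by
        exact_mod_cast sum_card_inter_sq blk S
    _ = ∑ x ∈ S, (r + (#S - 1) * lam : ℝ) := sum_congr rfl row
    _ = #S * r + (#S ^ 2 - #S) * lam := by rw [sum_const, nsmul_eq_mul]; ring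

variable [Fintype X]

theorem natCard_incidences (S : Finset X) (L : Finset B) :
    Nat.card {p : X × B // p.1 ∈ S ∧ p.2 ∈ L ∧ p.1 ∈ blk p.2} = ∑ β ∈ L, #(S ∩ blk β) := by
  classical
  rw [Nat.card_eq_fintype_card, Fintype.card_subtype, card_filter, Fintype.sum_prod_type,
    sum_comm, ← univ_inter L, ← sum_ite_mem, univ_inter]
  refine sum_congr rfl fun β _ => ?_
  by_cases hβ : β ∈ L <;> simp [hβ, filter_and]

theorem cov_card_inter [Nonempty B] (hk : ∀ β, #(blk β) = k)
    (hr : ∀ x, #{β | x ∈ blk β} = r)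
    (hlam : ∀ x y, x ≠ y → #{β | x ∈ blk β ∧ y ∈ blk β} = lam) (S : Finset X) :
    cov univ (fun β => (#(S ∩ blk β) : ℝ)) (fun β => (#(S ∩ blk β) : ℝ)) =
      (r - lam) * (#S * (1 - #S / Fintype.card X)) := by
  rcases S.eq_empty_or_nonempty with rfl | ⟨x, -⟩
  · simp [cov]
  have hb : (Fintype.card B : ℝ) ≠ 0 := by positivity
  have hv : (Fintype.card X : ℝ) ≠ 0 := Nat.cast_ne_zero.2 (Fintype.card_pos_iff.2 ⟨x⟩).ne'
  have h1 := sum_card_inter_eq blk hr univ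
  have h2 := sum_card_inter_sq_eq blk hr hlam univ
  simp only [univ_inter, hk, sum_const, card_univ, nsmul_eq_mul] at h1 h2
  have hrk : (r : ℝ) * k = r + (Fintype.card X - 1) * lam :=
    mul_left_cancel₀ hv (by linear_combination h2 - k * h1)
  simp only [cov, ← sq]
  rw [sum_card_inter_eq blk hr, sum_card_inter_sq_eq blk hr hlam, card_univ]
  field_simp
  linear_combination (#S : ℝ) ^ 2 * (r * h1 - Fintype.card B * hrk)

end BlockDesign

theorem design_incidence_bound_general (X B : Type*) [Fintype X] [Fintype B]
    (blk : B → Finset X) (v k lam r b : ℕ)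
    (hv : Fintype.card X = v) (hb : Fintype.card B = b)
    (hksize : ∀ β : B, (blk β).card = k)
    (hlam : ∀ x y : X, x ≠ y → Nat.card {β : B // x ∈ blk β ∧ y ∈ blk β} = lam)
    (hr : ∀ x : X, Nat.card {β : B // x ∈ blk β} = r)
    (S : Finset X) (Lset : Finset B) :
    |(Nat.card {p : X × B // p.1 ∈ S ∧ p.2 ∈ Lset ∧ p.1 ∈ blk p.2} : ℝ)
        - (r : ℝ) * S.card * Lset.card / b|
      ≤ Real.sqrt ((r : ℝ) - lam) *
        Real.sqrt ((S.card : ℝ) * Lset.card * (1 - (S.card : ℝ) / v) * (1 - (Lset.card : ℝ) / b)) := by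
  classical
  subst hv hb
  rcases isEmpty_or_nonempty B with _ | _
  · simp [eq_empty_of_isEmpty Lset]
  simp only [Nat.card_eq_fintype_card, Fintype.card_subtype] at hr hlam
  set f : B → ℝ := fun β => #(S ∩ blk β)
  set g : B → ℝ := fun β => if β ∈ Lset then 1 else 0
  have hfg : cov univ f g = ∑ β ∈ Lset, f β - r * #S * #Lset / Fintype.card B := by
    rw [cov_ite_mem f (subset_univ Lset), BlockDesign.sum_card_inter_eq blk hr, card_univ]
    ring
  have hff := BlockDesign.cov_card_inter blk hksize hr hlam S
  have hgg : cov univ g g = _ := cov_ite_mem_self (subset_univ Lset)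
  have hS : 0 ≤ (#S : ℝ) * (1 - #S / Fintype.card X) :=
    mul_nonneg (Nat.cast_nonneg _)
      (sub_nonneg.2 (div_le_one_of_le₀ (mod_cast card_le_univ S) (Nat.cast_nonneg _)))
  calc _ = |cov univ f g| := by rw [hfg, BlockDesign.natCard_incidences, Nat.cast_sum]
    _ ≤ √(cov univ f f) * √(cov univ g g) := abs_cov_le univ f g
    _ = _ := by
      rw [hff, hgg, Real.sqrt_mul' _ hS, mul_assoc, ← Real.sqrt_mul hS, card_univ]
      congr 2
      ring

/-- The incidence bound (expander mixing lemma) for 2-(v,k,λ) designs. -/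
theorem design_incidence_bound (X B : Type*) [Fintype X] [Fintype B]
    (blk : B → Finset X) (v k lam r b : ℕ)
    (hv : Fintype.card X = v) (hb : Fintype.card B = b)
    (hv0 : 0 < v) (hk : 2 ≤ k) (hlam0 : 0 < lam)
    (hksize : ∀ β : B, (blk β).card = k)
    (hlam : ∀ x y : X, x ≠ y → Nat.card {β : B // x ∈ blk β ∧ y ∈ blk β} = lam)
    (hr : ∀ x : X, Nat.card {β : B // x ∈ blk β} = r)
    (S : Finset X) (Lset : Finset B) :
    |(Nat.card {p : X × B // p.1 ∈ S ∧ p.2 ∈ Lset ∧ p.1 ∈ blk p.2} : ℝ)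
        - (r : ℝ) * S.card * Lset.card / b|
      ≤ Real.sqrt ((r : ℝ) - lam) *
        Real.sqrt ((S.card : ℝ) * Lset.card * (1 - (S.card : ℝ) / v) * (1 - (Lset.card : ℝ) / b)) :=
  design_incidence_bound_general X B blk v k lam r b hv hb hksize hlam hr S Lset
end

section
/- Let q be a prime power and n ≥ 2. Let S be a set of points of PG(n,q) such that through each point of S there is a hyperplane meeting S in exactly one point. Then |S| ≤ 1 + q^{(n+1)/2}. -/
open Finset Module

section Aux

variable {F : Type*} [Field F] [Fintype F] {V : Type*} [AddCommGroup V]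
    [Module F V] [Fintype V]

private noncomputable instance auxFintypeDual : Fintype (Module.Dual F V) := by
  haveI : Finite (Module.Dual F V) :=
    Finite.of_injective (fun φ => (φ : V → F)) DFunLike.coe_injective
  exact Fintype.ofFinite _

private lemma card_dual_annih (W : Submodule F V) :
    Nat.card {φ : Module.Dual F V // ∀ w ∈ W, φ w = 0} =
      Fintype.card F ^ (Module.finrank F V - Module.finrank F W) := by
  haveI : FiniteDimensional F V := Module.Finite.of_finite (R := F)
  have e1 : {φ : Module.Dual F V // ∀ w ∈ W, φ w = 0} ≃ W.dualAnnihilator :=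
    Equiv.subtypeEquivRight (fun φ => (Submodule.mem_dualAnnihilator φ).symm)
  haveI : Finite (V ⧸ W) := Quotient.finite _
  haveI : Fintype (V ⧸ W) := Fintype.ofFinite _
  rw [Nat.card_congr e1, ← Nat.card_congr (Subspace.quotEquivAnnihilator W).toEquiv,
    Nat.card_eq_fintype_card, card_eq_pow_finrank (K := F) (V := V ⧸ W)]
  congr 1
  have := Submodule.finrank_quotient_add_finrank W
  omega

private lemma card_dual_zero_one (x : V) (hx : x ≠ 0) :
    Nat.card {φ : Module.Dual F V // φ x = 0} =
      Fintype.card F ^ (Module.finrank F V - 1) := by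
  classical
  have h := card_dual_annih (F := F) (Submodule.span F {x})
  rw [finrank_span_singleton hx] at h
  rw [← h]
  apply Nat.card_congr
  apply Equiv.subtypeEquivRight
  intro φ
  constructor
  · intro h0 w hw
    obtain ⟨c, rfl⟩ := Submodule.mem_span_singleton.1 hw
    simp [h0]
  · intro hall
    exact hall x (Submodule.mem_span_singleton_self x)

private lemma card_dual_zero_two {x y : V} (hxy : LinearIndependent F ![x, y]) :
    Nat.card {φ : Module.Dual F V // φ x = 0 ∧ φ y = 0} =
      Fintype.card F ^ (Module.finrank F V - 2) := by
  classical
  haveI : FiniteDimensional F V := Module.Finite.of_finite (R := F)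
  have h := card_dual_annih (F := F) (Submodule.span F {x, y})
  have hr : Module.finrank F (Submodule.span F ({x, y} : Set V)) = 2 := by
    have hrange : Set.range ![x, y] = {x, y} := by
      simp only [Matrix.range_cons, Matrix.range_empty, Set.union_empty, Set.union_singleton]
      exact Set.pair_comm y x
    have := finrank_span_eq_card hxy
    rw [hrange] at this
    simpa using this
  rw [hr] at h
  rw [← h]
  apply Nat.card_congr
  apply Equiv.subtypeEquivRight
  intro φ
  constructor
  · rintro ⟨h1, h2⟩ w hw
    obtain ⟨c, d, rfl⟩ := Submodule.mem_span_pair.1 hw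
    simp [h1, h2]
  · intro hall
    exact ⟨hall x (Submodule.subset_span (by simp)),
      hall y (Submodule.subset_span (by simp))⟩

end Aux

private lemma rep_pair_linearIndependent {F : Type*} [Field F] {V : Type*} [AddCommGroup V]
    [Module F V] {p r : Projectivization F V} (hpr : p ≠ r) :
    LinearIndependent F ![p.rep, r.rep] := by
  rw [linearIndependent_fin2]
  refine ⟨r.rep_nonzero, fun c hc => ?_⟩
  apply hpr
  have : Projectivization.mk F p.rep p.rep_nonzero = Projectivization.mk F r.rep r.rep_nonzero :=
    (Projectivization.mk_eq_mk_iff' F _ _ _ _).2 ⟨c, hc⟩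
  rw [Projectivization.mk_rep, Projectivization.mk_rep] at this
  exact this

set_option maxHeartbeats 1000000 in
/-- Bruen–Thas bound for tangency sets with respect to hyperplanes in PG(n,q). -/
theorem tangency_set_hyperplanes_bound (F : Type*) [Field F] [Fintype F]
    (q n : ℕ) (hq : Fintype.card F = q) (hn : 2 ≤ n)
    (S : Set (Projectivization F (Fin (n + 1) → F)))
    (hS : ∀ p ∈ S, ∃ φ : Module.Dual F (Fin (n + 1) → F), φ ≠ 0 ∧
        φ p.rep = 0 ∧ {y ∈ S | φ y.rep = 0}.ncard = 1) :
    (S.ncard : ℝ) ≤ 1 + (q : ℝ) ^ (((n : ℝ) + 1) / 2) := by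
  classical
  set V := (Fin (n + 1) → F)
  set DD := Module.Dual F V
  have hq2 : 2 ≤ q := hq ▸ Fintype.one_lt_card
  have hq0 : (0:ℝ) < (q:ℝ) := by positivity
  -- basic counting facts
  have hfrk : Module.finrank F V = n + 1 := by
    simp [V, Module.finrank_fintype_fun_eq_card]
  have hcardDD : Fintype.card DD = q ^ (n + 1) := by
    rw [card_eq_pow_finrank (K := F) (V := DD), Subspace.dual_finrank_eq, hfrk, hq]
  haveI : Finite (Projectivization F V) := Quotient.finite _
  -- the finite set S
  have hSfin : S.Finite := Set.toFinite S
  set S' : Finset (Projectivization F V) := hSfin.toFinset with hS'def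
  have hS'coe : (S' : Set (Projectivization F V)) = S := hSfin.coe_toFinset
  have hs_card : (S.ncard : ℝ) = (S'.card : ℝ) := by
    rw [← Set.ncard_coe_finset, hS'coe]
  set s : ℕ := S'.card with hsdef
  -- multiplicities
  set m : DD → ℕ := fun φ => (S'.filter (fun y => φ y.rep = 0)).card with hmdef
  set D : Finset DD := Finset.univ.filter (fun φ => φ ≠ 0) with hDdef
  have hDcard : D.card = q ^ (n + 1) - 1 := by
    rw [hDdef, Finset.filter_ne', Finset.card_erase_of_mem (Finset.mem_univ _),
      Finset.card_univ, hcardDD]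
  -- count of nonzero functionals vanishing at one projective point
  have hcount1 : ∀ p : Projectivization F V,
      (D.filter (fun φ => φ p.rep = 0)).card = q ^ n - 1 := by
    intro p
    have h1 : (Finset.univ.filter (fun φ : DD => φ p.rep = 0)).card = q ^ n := by
      rw [← Fintype.card_subtype, ← Nat.card_eq_fintype_card,
        card_dual_zero_one p.rep p.rep_nonzero, hfrk, hq]
      norm_num
    have heq : D.filter (fun φ => φ p.rep = 0) =
        (Finset.univ.filter (fun φ : DD => φ p.rep = 0)).erase 0 := by
      ext φ
      simp [hDdef, Finset.mem_erase, and_comm, Finset.filter_filter]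
    have h0 : (0:DD) ∈ Finset.univ.filter (fun φ : DD => φ p.rep = 0) :=
      Finset.mem_filter.2 ⟨Finset.mem_univ _, rfl⟩
    rw [heq, Finset.card_erase_of_mem h0, h1]
  -- count for two distinct projective points
  have hcount2 : ∀ p r : Projectivization F V, p ≠ r →
      (D.filter (fun φ => φ p.rep = 0 ∧ φ r.rep = 0)).card = q ^ (n - 1) - 1 := by
    intro p r hpr
    have h1 : (Finset.univ.filter (fun φ : DD => φ p.rep = 0 ∧ φ r.rep = 0)).card =
        q ^ (n - 1) := by
      have hexp : n + 1 - 2 = n - 1 := by omega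
      rw [← Fintype.card_subtype, ← Nat.card_eq_fintype_card,
        card_dual_zero_two (rep_pair_linearIndependent hpr), hfrk, hq, hexp]
    have heq : D.filter (fun φ => φ p.rep = 0 ∧ φ r.rep = 0) =
        (Finset.univ.filter (fun φ : DD => φ p.rep = 0 ∧ φ r.rep = 0)).erase 0 := by
      ext φ
      simp [hDdef, Finset.mem_erase, and_comm, Finset.filter_filter]
    have h0 : (0:DD) ∈ Finset.univ.filter (fun φ : DD => φ p.rep = 0 ∧ φ r.rep = 0) :=
      Finset.mem_filter.2 ⟨Finset.mem_univ _, ⟨rfl, rfl⟩⟩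
    rw [heq, Finset.card_erase_of_mem h0, h1]
  -- first moment
  have hsum1 : ∑ φ ∈ D, (m φ : ℝ) = s * ((q:ℝ) ^ n - 1) := by
    have : ∑ φ ∈ D, (m φ : ℝ) = ∑ φ ∈ D, ∑ y ∈ S', (if φ y.rep = 0 then (1:ℝ) else 0) := by
      refine Finset.sum_congr rfl fun φ _ => ?_
      rw [hmdef]; push_cast [Finset.card_filter]; rfl
    rw [this, Finset.sum_comm]
    have : ∀ y ∈ S', ∑ φ ∈ D, (if φ y.rep = 0 then (1:ℝ) else 0) = (q:ℝ) ^ n - 1 := by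
      intro y _
      rw [← Finset.sum_filter]
      simp only [Finset.sum_const, nsmul_eq_mul, mul_one]
      rw [hcount1 y]
      have : (1:ℕ) ≤ q ^ n := Nat.one_le_pow _ _ (by omega)
      push_cast [this]; ring
    rw [Finset.sum_congr rfl this, Finset.sum_const, nsmul_eq_mul]
  -- second moment
  have hsum2 : ∑ φ ∈ D, (m φ : ℝ) ^ 2 =
      s * ((q:ℝ) ^ n - 1) + s * (s - 1) * ((q:ℝ) ^ (n - 1) - 1) := by
    have expand : ∀ φ : DD, (m φ : ℝ) ^ 2 =
        ∑ y ∈ S', ∑ z ∈ S', (if φ y.rep = 0 ∧ φ z.rep = 0 then (1:ℝ) else 0) := by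
      intro φ
      have : (m φ : ℝ) = ∑ y ∈ S', (if φ y.rep = 0 then (1:ℝ) else 0) := by
        rw [hmdef]; push_cast [Finset.card_filter]; rfl
      rw [this, sq, Finset.sum_mul_sum]
      refine Finset.sum_congr rfl fun y _ => Finset.sum_congr rfl fun z _ => ?_
      by_cases h1 : φ y.rep = 0 <;> by_cases h2 : φ z.rep = 0 <;> simp [h1, h2]
    rw [Finset.sum_congr rfl fun φ _ => expand φ, Finset.sum_comm]
    have inner : ∀ y ∈ S', ∑ φ ∈ D, ∑ z ∈ S',
        (if φ y.rep = 0 ∧ φ z.rep = 0 then (1:ℝ) else 0) =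
        ((q:ℝ) ^ n - 1) + (s - 1) * ((q:ℝ) ^ (n - 1) - 1) := by
      intro y hy
      rw [Finset.sum_comm]
      have step : ∀ z ∈ S', ∑ φ ∈ D, (if φ y.rep = 0 ∧ φ z.rep = 0 then (1:ℝ) else 0) =
          if z = y then ((q:ℝ) ^ n - 1) else ((q:ℝ) ^ (n - 1) - 1) := by
        intro z _
        rw [← Finset.sum_filter]
        simp only [Finset.sum_const, nsmul_eq_mul, mul_one]
        by_cases hzy : z = y
        · subst hzy
          simp only [if_true]
          have : D.filter (fun φ => φ z.rep = 0 ∧ φ z.rep = 0) =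
              D.filter (fun φ => φ z.rep = 0) := by
            congr 1; ext φ; simp
          rw [this, hcount1 z]
          have : (1:ℕ) ≤ q ^ n := Nat.one_le_pow _ _ (by omega)
          push_cast [this]; ring
        · rw [if_neg hzy, hcount2 y z (Ne.symm hzy)]
          have : (1:ℕ) ≤ q ^ (n - 1) := Nat.one_le_pow _ _ (by omega)
          push_cast [this]; ring
      rw [Finset.sum_congr rfl step, ← Finset.add_sum_erase _ _ hy, if_pos rfl,
        Finset.sum_congr rfl (fun z hz => if_neg (Finset.ne_of_mem_erase hz)),
        Finset.sum_const, Finset.card_erase_of_mem hy, nsmul_eq_mul]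
      have hs1 : (1:ℕ) ≤ s := Finset.card_pos.2 ⟨y, hy⟩
      rw [← hsdef]
      push_cast [hs1]
      ring
    rw [Finset.sum_congr rfl inner, Finset.sum_const, nsmul_eq_mul]
    ring
  -- tangent functionals
  choose! tang htang0 htangp htang1 using hS
  -- for p ∈ S the tangent set is exactly {p}
  have htangset : ∀ p ∈ S, {y ∈ S | tang p y.rep = 0} = {p} := by
    intro p hp
    obtain ⟨a, ha⟩ := Set.ncard_eq_one.1 (htang1 p hp)
    have hpmem : p ∈ {y ∈ S | tang p y.rep = 0} := ⟨hp, htangp p hp⟩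
    rw [ha] at hpmem ⊢
    simp_all
  -- the finset of tangent functionals with their scalar multiples
  set T : Finset DD := (S' ×ˢ (Finset.univ : Finset Fˣ)).image
      (fun pc => (pc.2 : F) • tang pc.1) with hTdef
  have hmem_S' : ∀ p, p ∈ S' ↔ p ∈ S := by
    intro p; rw [← hS'coe]; simp
  -- scalar multiples have the same zero sets
  have hker : ∀ (c : Fˣ) (φ : DD) (v : V), ((c : F) • φ) v = 0 ↔ φ v = 0 := by
    intro c φ v
    rw [LinearMap.smul_apply, smul_eq_zero]
    simp [c.ne_zero]
  have hinj : Set.InjOn (fun pc : _ × Fˣ => (pc.2 : F) • tang pc.1)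
      ((S' ×ˢ (Finset.univ : Finset Fˣ)) : Finset (_ × Fˣ)) := by
    rintro ⟨p, c⟩ hpc ⟨p', c'⟩ hpc' heq
    simp only [Finset.coe_product, Set.mem_prod, Finset.mem_coe, hmem_S'] at hpc hpc'
    simp only at heq
    have hpS := hpc.1
    have hp'S := hpc'.1
    have hsets : {y ∈ S | tang p y.rep = 0} = {y ∈ S | tang p' y.rep = 0} := by
      ext y
      constructor
      · rintro ⟨hyS, hy0⟩
        refine ⟨hyS, ?_⟩
        rw [← hker c' (tang p') y.rep, ← heq, hker]
        exact hy0
      · rintro ⟨hyS, hy0⟩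
        refine ⟨hyS, ?_⟩
        rw [← hker c (tang p) y.rep, heq, hker]
        exact hy0
    have hpp' : p = p' := by
      have h1 := htangset p hpS
      have h2 := htangset p' hp'S
      rw [h1, h2] at hsets
      exact Set.singleton_eq_singleton_iff.1 hsets
    subst hpp'
    have hcc' : (c : F) = (c' : F) := by
      obtain ⟨v, hv⟩ : ∃ v, tang p v ≠ 0 := by
        by_contra hcon
        push_neg at hcon
        exact htang0 p hpS (LinearMap.ext fun v => hcon v)
      have := congrFun (congrArg (fun ψ : DD => (ψ : V → F)) heq) v
      exact mul_right_cancel₀ hv this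
    simp [Units.ext hcc']
  have hTcard : T.card = s * (q - 1) := by
    rw [hTdef, Finset.card_image_of_injOn hinj, Finset.card_product, Finset.card_univ,
      ← hq, Fintype.card_units]
  have hTsub : T ⊆ D := by
    intro φ hφ
    rw [hTdef] at hφ
    obtain ⟨⟨p, c⟩, hpc, rfl⟩ := Finset.mem_image.1 hφ
    simp only [Finset.mem_product, hmem_S'] at hpc
    rw [hDdef, Finset.mem_filter]
    refine ⟨Finset.mem_univ _, ?_⟩
    exact smul_ne_zero c.ne_zero (htang0 p hpc.1)
  have hTm : ∀ φ ∈ T, m φ = 1 := by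
    intro φ hφ
    rw [hTdef] at hφ
    obtain ⟨⟨p, c⟩, hpc, rfl⟩ := Finset.mem_image.1 hφ
    simp only [Finset.mem_product, hmem_S'] at hpc
    have hpS := hpc.1
    rw [hmdef]
    have hfeq : S'.filter (fun y => ((c : F) • tang p) y.rep = 0) = {p} := by
      ext y
      simp only [Finset.mem_filter, Finset.mem_singleton, hmem_S', hker]
      simpa using Set.ext_iff.1 (htangset p hpS) y
    simp [hfeq]
  -- put the pieces together
  by_cases hs0 : s = 0
  · rw [hs_card, hs0]
    push_cast
    positivity
  have hs1 : 1 ≤ s := Nat.one_le_iff_ne_zero.2 hs0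
  -- real abbreviations
  set x : ℝ := (s : ℝ) with hxdef
  have hx1 : (1:ℝ) ≤ x := by rw [hxdef]; exact_mod_cast hs1
  -- sums over D \ T
  have hsplit_sum : ∑ φ ∈ D \ T, (m φ : ℝ) = x * ((q:ℝ) ^ n - 1) - x * ((q:ℝ) - 1) := by
    have := Finset.sum_sdiff (f := fun φ => (m φ : ℝ)) hTsub
    have hTsum : ∑ φ ∈ T, (m φ : ℝ) = x * ((q:ℝ) - 1) := by
      rw [Finset.sum_congr rfl (fun φ hφ => by rw [hTm φ hφ])]
      rw [Finset.sum_const, nsmul_eq_mul, hTcard]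
      have : (1:ℕ) ≤ q := by omega
      push_cast [this]; ring
    have := congrArg (fun z => z - ∑ φ ∈ T, (m φ : ℝ)) this
    simp only [add_sub_cancel_right] at this
    rw [this, hTsum, hsum1]
  have hsplit_sq : ∑ φ ∈ D \ T, (m φ : ℝ) ^ 2 =
      x * ((q:ℝ) ^ n - 1) + x * (x - 1) * ((q:ℝ) ^ (n - 1) - 1) - x * ((q:ℝ) - 1) := by
    have := Finset.sum_sdiff (f := fun φ => (m φ : ℝ) ^ 2) hTsub
    have hTsum : ∑ φ ∈ T, (m φ : ℝ) ^ 2 = x * ((q:ℝ) - 1) := by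
      rw [Finset.sum_congr rfl (fun φ hφ => by rw [hTm φ hφ])]
      rw [Finset.sum_const, nsmul_eq_mul, hTcard]
      have : (1:ℕ) ≤ q := by omega
      push_cast [this]; ring
    have := congrArg (fun z => z - ∑ φ ∈ T, (m φ : ℝ) ^ 2) this
    simp only [add_sub_cancel_right] at this
    rw [this, hTsum, hsum2]
  have hsplit_card : ((D \ T).card : ℝ) = ((q:ℝ) ^ (n + 1) - 1) - x * ((q:ℝ) - 1) := by
    rw [Finset.card_sdiff_of_subset hTsub, hDcard, hTcard]
    have h1 : (1:ℕ) ≤ q ^ (n + 1) := Nat.one_le_pow _ _ (by omega)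
    have h2 : s * (q - 1) ≤ q ^ (n + 1) - 1 := by
      rw [← hDcard, ← hTcard]
      exact Finset.card_le_card hTsub
    have h3 : (1:ℕ) ≤ q := by omega
    push_cast [Nat.cast_sub h2, Nat.cast_sub h1, Nat.cast_sub h3]
    ring
  -- Cauchy–Schwarz
  have hCS : (∑ φ ∈ D \ T, (m φ : ℝ)) ^ 2 ≤
      ((D \ T).card : ℝ) * ∑ φ ∈ D \ T, (m φ : ℝ) ^ 2 := by
    have := Finset.sum_mul_sq_le_sq_mul_sq (D \ T) (fun _ => (1:ℝ)) (fun φ => (m φ : ℝ))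
    simpa using this
  rw [hsplit_sum, hsplit_sq, hsplit_card] at hCS
  -- algebraic manipulation: set a = q^(n-1)
  set a : ℝ := (q:ℝ) ^ (n - 1) with hadef
  have hqn : (q:ℝ) ^ n = (q:ℝ) * a := by
    rw [hadef, ← pow_succ']
    congr 1; omega
  have hqn1 : (q:ℝ) ^ (n + 1) = (q:ℝ) * ((q:ℝ) * a) := by
    rw [← hqn, ← pow_succ']
  have ha2 : (2:ℝ) ≤ a := by
    calc (2:ℝ) ≤ (q:ℝ) := by exact_mod_cast hq2
    _ = (q:ℝ) ^ 1 := (pow_one _).symm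
    _ ≤ (q:ℝ) ^ (n - 1) := by
        apply pow_le_pow_right₀ (by exact_mod_cast (by omega : 1 ≤ q))
        omega
  rw [hqn, hqn1] at hCS
  -- key identity: RHS - LHS = x*(a-1)*(q-1)*(q^2*a - (x-1)^2)
  have hkey : ((q:ℝ) * ((q:ℝ) * a) - 1 - x * ((q:ℝ) - 1)) *
        (x * ((q:ℝ) * a - 1) + x * (x - 1) * (a - 1) - x * ((q:ℝ) - 1)) -
      (x * ((q:ℝ) * a - 1) - x * ((q:ℝ) - 1)) ^ 2 =
      x * (a - 1) * ((q:ℝ) - 1) * ((q:ℝ) ^ 2 * a - (x - 1) ^ 2) := by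
    ring
  have hfac : 0 ≤ x * (a - 1) * ((q:ℝ) - 1) * ((q:ℝ) ^ 2 * a - (x - 1) ^ 2) := by
    rw [← hkey]; linarith [hCS]
  have hq1 : (2:ℝ) ≤ (q:ℝ) := by exact_mod_cast hq2
  have hpos : 0 < x * (a - 1) * ((q:ℝ) - 1) :=
    mul_pos (mul_pos (by linarith) (by linarith)) (by linarith)
  have hsq : (x - 1) ^ 2 ≤ (q:ℝ) ^ 2 * a := by nlinarith
  -- conclude
  have hxle : x - 1 ≤ Real.sqrt ((q:ℝ) ^ (n + 1)) := by
    rw [hqn1]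
    have h1 : (q:ℝ) * ((q:ℝ) * a) = (q:ℝ) ^ 2 * a := by ring
    rw [h1]
    rcases le_or_gt (x - 1) 0 with h | h
    · exact h.trans (Real.sqrt_nonneg _)
    · rw [Real.le_sqrt h.le (by nlinarith : (0:ℝ) ≤ (q:ℝ) ^ 2 * a)]
      exact hsq
  have hrpow : Real.sqrt ((q:ℝ) ^ (n + 1)) = (q : ℝ) ^ (((n : ℝ) + 1) / 2) := by
    rw [Real.sqrt_eq_rpow, ← Real.rpow_natCast (q:ℝ) (n+1), ← Real.rpow_mul hq0.le]
    congr 1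
    push_cast
    ring
  rw [hs_card]
  calc (S'.card : ℝ) = x := rfl
  _ ≤ 1 + Real.sqrt ((q:ℝ) ^ (n + 1)) := by linarith
  _ = 1 + (q : ℝ) ^ (((n : ℝ) + 1) / 2) := by rw [hrpow]
end

section
/- Let S be a minimal blocking set in a 2-(v, k, λ) design with replication number r and b blocks (every block meets S; through each point of S there is a block meeting S in exactly one point). Then |S| < v·(1 + √(r−λ))/k. -/
/-!
Write `n β = |S ∩ β|`. Double counting incidences and incident pairs gives `∑ n β = |S| r` and
`∑ n β ^ 2 = |S| r + |S| (|S| - 1) λ`; since `r / b = k / v`, the mean of the `n β` is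
`μ = |S| k / v`, and the identity `r (k - 1) = λ (v - 1)` turns the variance into
`∑ (n β - μ) ^ 2 = |S| (r - λ) (1 - |S| / v)`. Distinct points of `S` have distinct tangent blocks
(`n β = 1`), so at least `|S|` terms of this sum equal `(1 - μ) ^ 2`. Hence
`(1 - μ) ^ 2 ≤ (r - λ) (1 - |S| / v) < r - λ`, i.e. `μ < 1 + √(r - λ)`.
-/

open Finset

theorem card_mul_sq_sub_le_sum_sq_sub {ι : Type*} [Fintype ι] (f : ι → ℝ) (c μ : ℝ)
    (T : Finset ι) (hT : ∀ i ∈ T, f i = c) : #T * (c - μ) ^ 2 ≤ ∑ i, (f i - μ) ^ 2 :=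
  calc #T * (c - μ) ^ 2 = ∑ i ∈ T, (f i - μ) ^ 2 := by
        rw [sum_congr rfl fun i hi => by rw [hT i hi], sum_const, nsmul_eq_mul]
    _ ≤ ∑ i, (f i - μ) ^ 2 :=
        sum_le_sum_of_subset_of_nonneg (subset_univ T) fun _ _ _ => sq_nonneg _

section Incidence

variable {X B : Type*} [Fintype B] [DecidableEq X] (blk : B → Finset X)

theorem sum_card_inter_blocks (S : Finset X) :
    ∑ β, #(S ∩ blk β) = ∑ p ∈ S, #{β | p ∈ blk β} := by
  simp_rw [← filter_mem_eq_inter, card_eq_sum_ones, sum_filter]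
  exact sum_comm

theorem sum_sq_card_inter_blocks (S : Finset X) :
    ∑ β, #(S ∩ blk β) ^ 2 = ∑ p ∈ S, ∑ q ∈ S, #{β | p ∈ blk β ∧ q ∈ blk β} := by
  simp_rw [sq, ← filter_mem_eq_inter, card_eq_sum_ones, sum_filter, sum_mul_sum,
    ite_zero_mul_ite_zero, mul_one]
  rw [sum_comm]
  exact sum_congr rfl fun p _ => sum_comm

theorem card_le_card_tangent_blocks {S : Finset X}
    (htan : ∀ p ∈ S, ∃ β, p ∈ blk β ∧ #(S ∩ blk β) = 1) :
    #S ≤ #{β | #(S ∩ blk β) = 1} := by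
  refine card_le_card_of_forall_subsingleton (fun p β => p ∈ blk β)
    (fun p hp => by simpa [and_comm] using htan p hp) fun β hβ p hp q hq => ?_
  rw [mem_filter] at hβ
  exact card_le_one.mp hβ.2.le p (mem_inter.2 hp) q (mem_inter.2 hq)

variable {r lam : ℕ} (hr : ∀ x, #{β | x ∈ blk β} = r)
include hr

theorem sum_card_inter_blocks_eq (S : Finset X) : ∑ β, #(S ∩ blk β) = #S * r := by
  simp [sum_card_inter_blocks, hr]

theorem sum_sq_card_inter_blocks_eq (hlam : ∀ x y, x ≠ y → #{β | x ∈ blk β ∧ y ∈ blk β} = lam)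
    (S : Finset X) : ∑ β, #(S ∩ blk β) ^ 2 = #S * r + #S * (#S - 1) * lam := by
  have hrow : ∀ p ∈ S, ∑ q ∈ S, #{β | p ∈ blk β ∧ q ∈ blk β} = r + (#S - 1) * lam := by
    intro p hp
    rw [← add_sum_erase _ _ hp, sum_congr rfl fun q hq => hlam p q (ne_of_mem_erase hq).symm]
    simp [hr, card_erase_of_mem hp]
  rw [sum_sq_card_inter_blocks, sum_congr rfl hrow, sum_const, smul_eq_mul]
  ring

variable [Fintype X] {k : ℕ} (hk : ∀ β, #(blk β) = k)
include hk

theorem card_blocks_mul_eq : Fintype.card B * k = Fintype.card X * r := by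
  simpa [hk] using sum_card_inter_blocks_eq blk hr univ

theorem replication_mul_pred_eq [Nonempty X]
    (hlam : ∀ x y, x ≠ y → #{β | x ∈ blk β ∧ y ∈ blk β} = lam) :
    (r : ℝ) * (k - 1) = lam * (Fintype.card X - 1) := by
  have hcount : (Fintype.card B : ℝ) * k = Fintype.card X * r := by
    exact_mod_cast card_blocks_mul_eq blk hr hk
  have hsq : (Fintype.card B : ℝ) * k ^ 2
      = Fintype.card X * r + Fintype.card X * (Fintype.card X - 1) * lam := by
    have := sum_sq_card_inter_blocks_eq blk hr hlam univ
    simp only [univ_inter, hk, sum_const, card_univ, smul_eq_mul] at this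
    rw [← Nat.cast_pred Fintype.card_pos]
    exact_mod_cast this
  have hv : (Fintype.card X : ℝ) ≠ 0 := Nat.cast_ne_zero.2 Fintype.card_ne_zero
  apply mul_left_cancel₀ hv
  linear_combination hsq - k * hcount

theorem sum_sq_card_inter_sub_mean [Nonempty X]
    (hlam : ∀ x y, x ≠ y → #{β | x ∈ blk β ∧ y ∈ blk β} = lam) (S : Finset X) :
    ∑ β, ((#(S ∩ blk β) : ℝ) - #S * k / Fintype.card X) ^ 2
      = #S * (r - lam) * (1 - #S / Fintype.card X) := by
  have hv : (Fintype.card X : ℝ) ≠ 0 := Nat.cast_ne_zero.2 Fintype.card_ne_zero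
  have hsum : ∑ β, (#(S ∩ blk β) : ℝ) = #S * r := by
    exact_mod_cast sum_card_inter_blocks_eq blk hr S
  have hsq : ∑ β, (#(S ∩ blk β) : ℝ) ^ 2 = #S * r + #S * (#S - 1) * lam := by
    have := sum_sq_card_inter_blocks_eq blk hr hlam S
    obtain hS | hS := S.eq_empty_or_nonempty
    · simp [hS]
    · rw [← Nat.cast_pred hS.card_pos]
      exact_mod_cast this
  have hcount : (Fintype.card B : ℝ) * k = Fintype.card X * r := by
    exact_mod_cast card_blocks_mul_eq blk hr hk
  have hrep := replication_mul_pred_eq blk hr hk hlam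
  simp only [sub_sq, sum_add_distrib, sum_sub_distrib, ← sum_mul, ← mul_sum, hsum, hsq,
    sum_const, card_univ, nsmul_eq_mul]
  field_simp
  linear_combination (#S : ℝ) ^ 2 * (k * hcount - Fintype.card X * hrep)

theorem lam_lt_replication [Nonempty X]
    (hlam : ∀ x y, x ≠ y → #{β | x ∈ blk β ∧ y ∈ blk β} = lam) (hkv : k < Fintype.card X)
    (hr0 : 0 < r) : lam < r := by
  have hkv' : (k : ℝ) - 1 < Fintype.card X - 1 := by
    have : (k : ℝ) < Fintype.card X := by exact_mod_cast hkv
    linarith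
  have hv1 : (0 : ℝ) ≤ Fintype.card X - 1 := sub_nonneg.2 (Nat.one_le_cast.2 Fintype.card_pos)
  suffices (lam : ℝ) < r by exact_mod_cast this
  refine lt_of_mul_lt_mul_right ?_ hv1
  rw [← replication_mul_pred_eq blk hr hk hlam]
  exact mul_lt_mul_of_pos_left hkv' (by exact_mod_cast hr0)

theorem card_mul_sq_one_sub_mean_le_of_tangent [Nonempty X]
    (hlam : ∀ x y, x ≠ y → #{β | x ∈ blk β ∧ y ∈ blk β} = lam) {S : Finset X}
    (htan : ∀ p ∈ S, ∃ β, p ∈ blk β ∧ #(S ∩ blk β) = 1) :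
    (#S : ℝ) * (1 - #S * k / Fintype.card X) ^ 2
      ≤ #S * ((r - lam) * (1 - #S / Fintype.card X)) := by
  rw [← mul_assoc, ← sum_sq_card_inter_sub_mean blk hr hk hlam S]
  refine le_trans ?_ (card_mul_sq_sub_le_sum_sq_sub _ 1 _ {β | #(S ∩ blk β) = 1} fun β hβ => ?_)
  · gcongr
    exact_mod_cast card_le_card_tangent_blocks blk htan
  · simpa using hβ

theorem mean_lt_one_add_sqrt_of_tangent
    (hlam : ∀ x y, x ≠ y → #{β | x ∈ blk β ∧ y ∈ blk β} = lam) (hkv : k < Fintype.card X)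
    {S : Finset X} (hS : S.Nonempty) (htan : ∀ p ∈ S, ∃ β, p ∈ blk β ∧ #(S ∩ blk β) = 1) :
    (#S * k / Fintype.card X : ℝ) < 1 + √(r - lam) := by
  obtain ⟨p, hp⟩ := hS
  obtain ⟨β, hpβ, -⟩ := htan p hp
  have : Nonempty X := ⟨p⟩
  have hS0 : (0 : ℝ) < #S := by exact_mod_cast card_pos.2 ⟨p, hp⟩
  have hv0 : (0 : ℝ) < Fintype.card X := by exact_mod_cast Fintype.card_pos
  have hlam_lt : (lam : ℝ) < r := by
    exact_mod_cast lam_lt_replication blk hr hk hlam hkv (hr p ▸ card_pos.2 ⟨β, by simpa using hpβ⟩)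
  have hdev : (1 - #S * k / Fintype.card X : ℝ) ^ 2 < r - lam :=
    calc _ ≤ (r - lam) * (1 - #S / Fintype.card X : ℝ) :=
          le_of_mul_le_mul_left (card_mul_sq_one_sub_mean_le_of_tangent blk hr hk hlam htan) hS0
      _ < r - lam := mul_lt_of_lt_one_right (by linarith) (by linarith [div_pos hS0 hv0])
  have := Real.lt_sqrt_of_sq_lt (x := (#S * k / Fintype.card X : ℝ) - 1)
    (by rwa [← neg_sub, neg_sq])
  linarith

end Incidence

theorem minimal_blocking_set_design_bound_general (X B : Type*) [Fintype X] [Fintype B]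
    (blk : B → Finset X) (v k lam r : ℕ)
    (hv : Fintype.card X = v)
    (hk : 2 ≤ k) (hkv : k < v)
    (hksize : ∀ β : B, (blk β).card = k)
    (hlam : ∀ x y : X, x ≠ y → Nat.card {β : B // x ∈ blk β ∧ y ∈ blk β} = lam)
    (hr : ∀ x : X, Nat.card {β : B // x ∈ blk β} = r)
    (S : Finset X)
    (hmin : ∀ p ∈ S, ∃ β : B, p ∈ blk β ∧ Nat.card {q : X // q ∈ S ∧ q ∈ blk β} = 1) :
    (S.card : ℝ) < (v : ℝ) * (1 + Real.sqrt ((r : ℝ) - lam)) / k := by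
  classical
  replace hr : ∀ x, #{β | x ∈ blk β} = r := fun x => by
    rw [← hr x, Nat.card_eq_fintype_card, Fintype.card_subtype]
  replace hlam : ∀ x y, x ≠ y → #{β | x ∈ blk β ∧ y ∈ blk β} = lam := fun x y hxy => by
    rw [← hlam x y hxy, Nat.card_eq_fintype_card, Fintype.card_subtype]
  replace hmin : ∀ p ∈ S, ∃ β, p ∈ blk β ∧ #(S ∩ blk β) = 1 := fun p hp => by
    simpa [Nat.card_eq_fintype_card, Fintype.card_subtype, ← mem_inter, filter_univ_mem] using
      hmin p hp
  subst hv
  have hk0 : (0 : ℝ) < k := by exact_mod_cast (by omega : 0 < k)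
  have hv0 : (0 : ℝ) < Fintype.card X := by exact_mod_cast (by omega : 0 < Fintype.card X)
  obtain hS | hS := S.eq_empty_or_nonempty
  · rw [hS, card_empty, Nat.cast_zero]
    positivity
  rw [lt_div_iff₀ hk0, ← div_lt_iff₀' hv0]
  exact mean_lt_one_add_sqrt_of_tangent blk hr hksize hlam hkv hS hmin

/-- Upper bound on minimal blocking sets in (not necessarily symmetric) 2-(v,k,λ) designs. -/
theorem minimal_blocking_set_design_bound (X B : Type*) [Fintype X] [Fintype B]
    (blk : B → Finset X) (v k lam r b : ℕ)
    (hv : Fintype.card X = v) (hb : Fintype.card B = b)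
    (hv0 : 0 < v) (hk : 2 ≤ k) (hkv : k < v) (hlam0 : 0 < lam)
    (hksize : ∀ β : B, (blk β).card = k)
    (hlam : ∀ x y : X, x ≠ y → Nat.card {β : B // x ∈ blk β ∧ y ∈ blk β} = lam)
    (hr : ∀ x : X, Nat.card {β : B // x ∈ blk β} = r)
    (S : Finset X)
    (hblock : ∀ β : B, ∃ p ∈ S, p ∈ blk β)
    (hmin : ∀ p ∈ S, ∃ β : B, p ∈ blk β ∧ Nat.card {q : X // q ∈ S ∧ q ∈ blk β} = 1) :
    (S.card : ℝ) < (v : ℝ) * (1 + Real.sqrt ((r : ℝ) - lam)) / k :=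
  minimal_blocking_set_design_bound_general X B blk v k lam r hv hk hkv hksize hlam hr S hmin
end

section
/- Let q be a square prime power, H a non-degenerate Hermitian curve in PG(2,q), P a point of H, L the tangent to H at P, and L₁,…,L_{t−1} (for t ≤ √q + 1) distinct secant lines through P distinct from L. Let ⊥ be the unitary polarity defining H. Then B = H ∪ L₁ ∪ ⋯ ∪ L_{t−1} ∪ {L₁^⊥,…,L_{t−1}^⊥} has |B| = q√q + 1 + (t−1)(q − √q + 1), every line meets B in at least t points, and every point of B lies on a line meeting B in exactly t points. -/
/-- Incidence between a point and a line of PG(2,q) in homogeneous coordinates. -/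
def PGinc {F : Type*} [Field F] (x ℓ : Projectivization F (Fin 3 → F)) : Prop :=
  ∑ i : Fin 3, ℓ.rep i * x.rep i = 0

/-- The Hermitian curve `x^(s+1) + y^(s+1) + z^(s+1) = 0` in PG(2,q), `s = √q`. -/
def HermitianCurve (F : Type*) [Field F] (s : ℕ) :
    Set (Projectivization F (Fin 3 → F)) :=
  {x | ∑ i : Fin 3, x.rep i ^ (s + 1) = 0}

open Classical in
/-- The pole of a line under the unitary polarity associated to the Hermitian curve:
in coordinates, the line with coefficient vector `w` is sent to the point `(wᵢ^s)ᵢ`. -/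
noncomputable def PGpole {F : Type*} [Field F] (s : ℕ)
    (ℓ : Projectivization F (Fin 3 → F)) : Projectivization F (Fin 3 → F) :=
  if h : (fun i => ℓ.rep i ^ s) ≠ (0 : Fin 3 → F) then Projectivization.mk F _ h else ℓ


/-!
Write `s = √q` and `z^⊥` for `PGpole s z`. A point `z` lies on `z^⊥` iff `z ∈ H`, and two points
`y ≠ z` of `H` cannot both lie on `z^⊥` (otherwise `y^⊥ = z^⊥`), so the tangent `z^⊥` meets `H`
only in `z`. On any other line through `z ∈ H`, parametrized as `⟨u z + y⟩`, the points of `H` are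
`z` and the solutions of `c u^s + c^s u + d = 0` with `c ≠ 0`; through `u ↦ c u^s` these are a fibre
of the trace `x ↦ x + x^s` onto the subfield of order `s`, so there are `s` of them. Every line
contains a point of `H`, by surjectivity of the norm `u ↦ u^(s+1)` onto that subfield. Hence
every line is a tangent or meets `H` in `s + 1` points, and `|H| = 1 + q s`.

Now `B` is the disjoint union of `H` and the petals `(ℓᵢ \ H) ∪ {ℓᵢ^⊥}`, each of size
`q + 1 - (s + 1) + 1`: the `ℓᵢ` meet only at `P ∈ H`, and their poles lie on `P^⊥`, which meets
each `ℓᵢ` only at `P`. A petal meets every tangent `z^⊥` exactly once (in `ℓᵢ^⊥` if `z ∈ ℓᵢ`, in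
`ℓᵢ ∩ z^⊥ ∉ H` otherwise), so tangents meet `B` in `1 + (t - 1)` points, secants in at least
`s + 1 ≥ t`, and every point `x` lies on a tangent, namely `z^⊥` for any `z ∈ H ∩ x^⊥`.
-/

open Projectivization Matrix Function

theorem Set.ncard_union_iUnion_inter {α ι : Type*} [Finite α] [Fintype ι] {A T : Set α}
    {C : ι → Set α} (hA : ∀ i, Disjoint A (C i)) (hC : Pairwise (Disjoint on C)) :
    ((A ∪ ⋃ i, C i) ∩ T).ncard = (A ∩ T).ncard + ∑ i, (C i ∩ T).ncard := by
  have hA' i : Disjoint (A ∩ T) (C i ∩ T) :=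
    (hA i).mono Set.inter_subset_left Set.inter_subset_left
  rw [Set.union_inter_distrib_right, Set.iUnion_inter,
    Set.ncard_union_eq (Set.disjoint_iUnion_right.2 hA'),
    Set.ncard_iUnion_of_finite (fun _ => Set.toFinite _)
      (fun i j hij => (hC hij).mono Set.inter_subset_left Set.inter_subset_left),
    finsum_eq_sum_of_fintype]

section SquareOrderField

open Polynomial Finset

variable {F : Type*} [Field F] [Fintype F] {s : ℕ}

theorem two_le_of_card_eq_mul_self (hF : Fintype.card F = s * s) : 2 ≤ s := by
  have := Fintype.one_lt_card (α := F)
  by_contra! h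
  interval_cases s <;> omega

theorem pow_pow_of_card_eq_mul_self (hF : Fintype.card F = s * s) (a : F) : (a ^ s) ^ s = a := by
  rw [← pow_mul, ← hF, FiniteField.pow_card]

theorem add_pow_of_card_eq_mul_self (hF : Fintype.card F = s * s) (a b : F) :
    (a + b) ^ s = a ^ s + b ^ s := by
  obtain ⟨p, hchar⟩ := CharP.exists F
  obtain ⟨n, hp, hcard⟩ := FiniteField.card F p
  have := Fact.mk hp
  obtain ⟨k, -, rfl⟩ := (Nat.dvd_prime_pow hp).1 (hcard ▸ hF ▸ dvd_mul_right s s)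
  exact add_pow_char_pow a b p k

theorem neg_pow_of_card_eq_mul_self (hF : Fintype.card F = s * s) (a : F) :
    (-a) ^ s = -a ^ s := by
  have h := add_pow_of_card_eq_mul_self hF a (-a)
  rw [add_neg_cancel, zero_pow (by have := two_le_of_card_eq_mul_self hF; omega)] at h
  exact eq_neg_of_add_eq_zero_right h.symm

section Counting

variable [DecidableEq F]

theorem card_filter_pow_add_mul_add_eq_zero_le {n : ℕ} (hn : 1 < n) (a b : F) :
    #{x | x ^ n + a * x + b = 0} ≤ n := by
  set p : F[X] := X ^ n + (C a * X + C b)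
  have hdeg : (C a * X + C b).degree < (n : WithBot ℕ) :=
    (degree_linear_le).trans_lt (by exact_mod_cast hn)
  have hp : p.Monic := monic_X_pow_add hdeg
  calc _ ≤ #p.roots.toFinset := card_le_card fun x hx => by
          replace hx : x ^ n + a * x + b = 0 := (mem_filter.1 hx).2
          simp [p, hp.ne_zero, ← hx, add_assoc]
    _ ≤ Multiset.card p.roots := Multiset.toFinset_card_le _
    _ ≤ p.natDegree := card_roots' p
    _ = n := by rw [natDegree_add_eq_left_of_degree_lt, natDegree_X_pow]; simpa using hdeg

theorem card_filter_pow_eq_self_le (hF : Fintype.card F = s * s) : #{x : F | x ^ s = x} ≤ s := by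
  have := card_filter_pow_add_mul_add_eq_zero_le (two_le_of_card_eq_mul_self hF) (-1 : F) 0
  simpa only [neg_one_mul, add_zero, ← sub_eq_add_neg, sub_eq_zero] using this

theorem card_filter_add_pow_eq (hF : Fintype.card F = s * s) {r : F} (hr : r ^ s = r) :
    #{x : F | x + x ^ s = r} = s := by
  have hs := two_le_of_card_eq_mul_self hF
  let T : F →+ F := AddMonoidHom.mk' (fun x => x + x ^ s) fun a b => by
    simp only [add_pow_of_card_eq_mul_self hF]; ring
  have hT : ∀ x, T x = x + x ^ s := fun _ => rfl
  -- `T` has kernel of size `≤ s` and image in `{y | y ^ s = y}` of size `≤ s`; as `|F| = s * s`,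
  -- both bounds are attained.
  have hker : #{x | T x = 0} ≤ s := by
    simpa [hT, add_comm] using card_filter_pow_add_mul_add_eq_zero_le (by omega : 1 < s) (1 : F) 0
  have himg : univ.image T ⊆ ({y | y ^ s = y} : Finset F) := fun y hy => by
    obtain ⟨x, -, rfl⟩ := mem_image.1 hy
    refine mem_filter.2 ⟨mem_univ _, ?_⟩
    rw [hT, add_pow_of_card_eq_mul_self hF, pow_pow_of_card_eq_mul_self hF, add_comm]
  have hfib : ∀ y ∈ univ.image T, #{x | T x = y} = #{x | T x = 0} := fun y hy =>
    AddMonoidHom.card_fiber_eq_of_mem_range T (by simpa using hy) ⟨0, map_zero T⟩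
  have hcard : s * s = #(univ.image T) * #{x | T x = 0} := by
    rw [← hF, ← card_univ, card_eq_sum_card_image T univ, sum_congr rfl hfib, sum_const,
      smul_eq_mul]
  have hfix := card_filter_pow_eq_self_le hF
  have hK : #{x | T x = 0} = s := by
    have := card_le_card himg
    nlinarith
  have hr' : r ∈ univ.image T := by
    refine (eq_of_subset_of_card_le himg ?_) ▸ mem_filter.2 ⟨mem_univ r, hr⟩
    nlinarith [card_le_card himg]
  exact (hfib r hr').trans hK

theorem card_filter_mul_pow_add_pow_mul_add_eq (hF : Fintype.card F = s * s) {c d : F}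
    (hc : c ≠ 0) (hd : d ^ s = d) : #{u : F | c * u ^ s + c ^ s * u + d = 0} = s := by
  have hpp := pow_pow_of_card_eq_mul_self hF
  refine (card_nbij' (fun u => c * u ^ s) (fun v => (v / c) ^ s) ?_ ?_ ?_ ?_).trans
    (card_filter_add_pow_eq hF (r := -d) (by rw [neg_pow_of_card_eq_mul_self hF, hd]))
  · intro u hu
    simp only [coe_filter, mem_univ, true_and, Set.mem_ofPred_eq] at hu ⊢
    rw [mul_pow, hpp]
    linear_combination hu
  · intro v hv
    simp only [coe_filter, mem_univ, true_and, Set.mem_ofPred_eq] at hv ⊢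
    rw [hpp, div_pow, mul_div_cancel₀ _ (pow_ne_zero _ hc), mul_div_cancel₀ _ hc]
    linear_combination hv
  · intro u _
    simp [hc, hpp]
  · intro v _
    simp [hpp, mul_div_cancel₀ _ hc]

end Counting

theorem exists_pow_succ_eq (hF : Fintype.card F = s * s) {r : F} (hr : r ^ s = r) :
    ∃ u : F, u ^ (s + 1) = r := by
  classical
  by_contra! h
  have hs := two_le_of_card_eq_mul_self hF
  -- Otherwise `u ↦ u ^ (s + 1)`, whose fibres have at most `s + 1` points, would map `F` into
  -- the at most `s - 1` solutions of `y ^ s = y` other than `r`.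
  have hmaps : ∀ u ∈ (univ : Finset F), u ^ (s + 1) ∈ ({y | y ^ s = y} : Finset F).erase r := by
    intro u _
    refine mem_erase.2 ⟨h u, mem_filter.2 ⟨mem_univ _, ?_⟩⟩
    rw [pow_succ, mul_pow, pow_pow_of_card_eq_mul_self hF, mul_comm]
  have hfib : ∀ b ∈ ({y | y ^ s = y} : Finset F).erase r, #{u | u ^ (s + 1) = b} ≤ s + 1 := by
    intro b _
    simpa [← sub_eq_add_neg, sub_eq_zero] using
      card_filter_pow_add_mul_add_eq_zero_le (by omega : 1 < s + 1) 0 (-b)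
  have hfix : #(({y | y ^ s = y} : Finset F).erase r) ≤ s - 1 := by
    rw [card_erase_of_mem (mem_filter.2 ⟨mem_univ r, hr⟩ : r ∈ ({y | y ^ s = y} : Finset F))]
    exact Nat.sub_le_sub_right (card_filter_pow_eq_self_le hF) 1
  have := card_le_mul_card_image_of_maps_to hmaps (s + 1) (by simpa using hfib)
  rw [card_univ, hF] at this
  have : s * s ≤ (s + 1) * (s - 1) := this.trans (Nat.mul_le_mul_left _ hfix)
  obtain ⟨k, rfl⟩ : ∃ k, s = k + 1 := ⟨s - 1, by omega⟩
  simp only [Nat.add_sub_cancel] at this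
  nlinarith

end SquareOrderField

section ProjectivePlane

variable {F : Type*} [Field F]

local notation "ℙ²" => Projectivization F (Fin 3 → F)

theorem PGinc_iff_dotProduct {x ℓ : ℙ²} : PGinc x ℓ ↔ x.rep ⬝ᵥ ℓ.rep = 0 := by
  rw [dotProduct_comm]
  rfl

theorem PGinc_iff_orthogonal {x ℓ : ℙ²} : PGinc x ℓ ↔ x.orthogonal ℓ := by
  conv_rhs => rw [← mk_rep x, ← mk_rep ℓ]
  rw [orthogonal_mk, PGinc_iff_dotProduct]

theorem PGinc_mk_mk_iff {v w : Fin 3 → F} (hv : v ≠ 0) (hw : w ≠ 0) :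
    PGinc (mk F v hv) (mk F w hw) ↔ v ⬝ᵥ w = 0 := by
  rw [PGinc_iff_orthogonal, orthogonal_mk]

theorem PGinc_comm {x ℓ : ℙ²} : PGinc x ℓ ↔ PGinc ℓ x := by
  rw [PGinc_iff_orthogonal, PGinc_iff_orthogonal, orthogonal_comm]

theorem eq_iff_crossProduct_rep_eq_zero {x y : ℙ²} : x = y ↔ x.rep ⨯₃ y.rep = 0 := by
  rw [← mk_eq_mk_iff_crossProduct_eq_zero x.rep_nonzero y.rep_nonzero, mk_rep, mk_rep]

theorem PGinc.eq_or_eq {x y ℓ m : ℙ²} (hxℓ : PGinc x ℓ) (hyℓ : PGinc y ℓ) (hxm : PGinc x m)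
    (hym : PGinc y m) : x = y ∨ ℓ = m := by
  classical
  refine or_iff_not_imp_left.2 fun hxy => ?_
  have eq_cross : ∀ n : ℙ², PGinc x n → PGinc y n → n = cross x y := by
    intro n hx hy
    induction x with | h v hv => induction y with | h w hw => induction n with | h u hu =>
    rw [PGinc_mk_mk_iff] at hx hy
    rw [cross_mk_of_ne hv hw hxy, mk_eq_mk_iff_crossProduct_eq_zero,
      cross_cross_eq_smul_sub_smul', hx, dotProduct_comm u, hy, zero_smul, zero_smul, sub_zero]
  rw [eq_cross ℓ hxℓ hyℓ, eq_cross m hxm hym]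

theorem exists_PGinc_PGinc {ℓ m : ℙ²} (h : ℓ ≠ m) : ∃ x, PGinc x ℓ ∧ PGinc x m := by
  classical
  simp only [PGinc_iff_orthogonal]
  exact ⟨cross ℓ m, cross_orthogonal_left h, cross_orthogonal_right h⟩

theorem ncard_setOf_PGinc [Fintype F] (ℓ : ℙ²) :
    {x | PGinc x ℓ}.ncard = Fintype.card F + 1 := by
  let W := LinearMap.ker (dotProductEquiv F (Fin 3) ℓ.rep)
  have hW : Module.finrank F W = 2 := by
    have := Module.Dual.finrank_ker_add_one_of_ne_zero
      (f := dotProductEquiv F (Fin 3) ℓ.rep) (by simpa using ℓ.rep_nonzero)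
    rw [Module.finrank_fin_fun] at this
    exact Nat.succ_injective this
  have hline : {x | PGinc x ℓ} = Set.range (map W.subtype W.subtype_injective) := by
    rw [← mk_rep ℓ]
    ext x
    induction x with | h v hv =>
    constructor
    · intro h
      have hvW : v ∈ W := by simpa [W, dotProduct_comm] using (PGinc_mk_mk_iff hv _).1 h
      exact ⟨mk F ⟨v, hvW⟩ (by simpa using hv), rfl⟩
    · rintro ⟨p, hp⟩
      induction p with | h w hw =>
      rw [← hp, map_mk]
      exact (PGinc_mk_mk_iff _ _).2 ((dotProduct_comm _ _).trans (LinearMap.mem_ker.1 w.2))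
  rw [hline, Set.ncard_range_of_injective (map_injective _ _), card_of_finrank_two F W hW,
    Nat.card_eq_fintype_card]

theorem exists_ne_PGinc [Fintype F] (x ℓ : ℙ²) : ∃ y, y ≠ x ∧ PGinc y ℓ := by
  have : 1 < {p | PGinc p ℓ}.ncard := by
    rw [ncard_setOf_PGinc]
    have := Fintype.one_lt_card (α := F)
    omega
  obtain ⟨y, hy, hyx⟩ := Set.exists_ne_of_one_lt_ncard this x
  exact ⟨y, hyx, hy⟩

theorem rep_cross_smul_rep_add_rep (x y : ℙ²) (u : F) :
    x.rep ⨯₃ (u • x.rep + y.rep) = x.rep ⨯₃ y.rep := by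
  rw [map_add, map_smul, _root_.cross_self, smul_zero, zero_add]

theorem smul_rep_add_rep_ne_zero {x y : ℙ²} (hxy : x ≠ y) (u : F) : u • x.rep + y.rep ≠ 0 := by
  intro h
  apply hxy
  rw [eq_iff_crossProduct_rep_eq_zero, ← rep_cross_smul_rep_add_rep x y u, h, map_zero]

noncomputable def linePoint {x y : ℙ²} (hxy : x ≠ y) (u : F) : ℙ² :=
  mk F (u • x.rep + y.rep) (smul_rep_add_rep_ne_zero hxy u)

theorem linePoint_injective {x y : ℙ²} (hxy : x ≠ y) : Injective (linePoint hxy) := by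
  intro u v h
  rw [linePoint, linePoint, mk_eq_mk_iff_crossProduct_eq_zero] at h
  have hc : x.rep ⨯₃ y.rep ≠ 0 := by rwa [Ne, ← eq_iff_crossProduct_rep_eq_zero]
  have : (u • x.rep + y.rep) ⨯₃ (v • x.rep + y.rep) = (u - v) • x.rep ⨯₃ y.rep := by
    simp only [map_add, map_smul, LinearMap.add_apply, LinearMap.smul_apply, _root_.cross_self]
    rw [← cross_anticomm y.rep x.rep]
    module
  rw [this, smul_eq_zero, sub_eq_zero] at h
  exact h.resolve_right hc

theorem linePoint_ne_left {x y : ℙ²} (hxy : x ≠ y) (u : F) : linePoint hxy u ≠ x := by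
  intro h
  have h' := h.trans (mk_rep x).symm
  rw [linePoint, mk_eq_mk_iff_crossProduct_eq_zero, ← cross_anticomm, neg_eq_zero,
    rep_cross_smul_rep_add_rep, ← eq_iff_crossProduct_rep_eq_zero] at h'
  exact hxy h'

theorem PGinc_linePoint {x y ℓ : ℙ²} (hxy : x ≠ y) (hx : PGinc x ℓ) (hy : PGinc y ℓ) (u : F) :
    PGinc (linePoint hxy u) ℓ := by
  rw [PGinc_iff_dotProduct] at hx hy
  rw [linePoint, ← mk_rep ℓ, PGinc_mk_mk_iff, add_dotProduct, smul_dotProduct, hx, hy, smul_zero,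
    add_zero]

theorem setOf_PGinc_eq_insert_range [Fintype F] {x y ℓ : ℙ²} (hxy : x ≠ y) (hx : PGinc x ℓ)
    (hy : PGinc y ℓ) : {p | PGinc p ℓ} = insert x (Set.range (linePoint hxy)) := by
  symm
  refine Set.eq_of_subset_of_ncard_le ?_ ?_ (Set.toFinite _)
  · rintro p (rfl | ⟨u, rfl⟩)
    exacts [hx, PGinc_linePoint hxy hx hy u]
  · rw [ncard_setOf_PGinc, Set.ncard_insert_of_notMem, Set.ncard_range_of_injective
      (linePoint_injective hxy), Nat.card_eq_fintype_card]
    rintro ⟨u, hu⟩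
    exact linePoint_ne_left hxy u hu

end ProjectivePlane

section UnitaryPolarity

variable {F : Type*} [Field F]

local notation "ℙ²" => Projectivization F (Fin 3 → F)

def hermForm (s : ℕ) (v w : Fin 3 → F) : F := ∑ i, v i ^ s * w i

theorem hermForm_smul_left (s : ℕ) (a : F) (v w : Fin 3 → F) :
    hermForm s (a • v) w = a ^ s * hermForm s v w := by
  simp only [hermForm, Finset.mul_sum, Pi.smul_apply, smul_eq_mul, mul_pow, mul_assoc]

theorem hermForm_smul_right (s : ℕ) (a : F) (v w : Fin 3 → F) :
    hermForm s v (a • w) = a * hermForm s v w := by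
  simp only [hermForm, Finset.mul_sum, Pi.smul_apply, smul_eq_mul, mul_left_comm]

theorem mk_mem_HermitianCurve_iff {s : ℕ} {v : Fin 3 → F} (hv : v ≠ 0) :
    mk F v hv ∈ HermitianCurve F s ↔ hermForm s v v = 0 := by
  obtain ⟨a, ha⟩ := exists_smul_eq_mk_rep F v hv
  change ∑ i, (mk F v hv).rep i ^ (s + 1) = 0 ↔ _
  simp_rw [pow_succ]
  rw [← ha, Units.smul_def]
  change hermForm s ((a : F) • v) ((a : F) • v) = 0 ↔ _
  rw [hermForm_smul_left, hermForm_smul_right, mul_eq_zero, mul_eq_zero,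
    or_iff_right (pow_ne_zero _ a.ne_zero), or_iff_right a.ne_zero]

theorem mem_HermitianCurve_iff {s : ℕ} {x : ℙ²} :
    x ∈ HermitianCurve F s ↔ hermForm s x.rep x.rep = 0 := by
  rw [← mk_mem_HermitianCurve_iff x.rep_nonzero, mk_rep]

theorem pow_rep_ne_zero (s : ℕ) (x : ℙ²) : (fun i => x.rep i ^ s) ≠ 0 := by
  obtain ⟨i, hi⟩ := ne_iff.1 x.rep_nonzero
  exact ne_iff.2 ⟨i, pow_ne_zero s hi⟩

theorem PGpole_eq (s : ℕ) (x : ℙ²) : PGpole s x = mk F _ (pow_rep_ne_zero s x) :=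
  dif_pos (pow_rep_ne_zero s x)

theorem PGinc_PGpole_iff {s : ℕ} {x y : ℙ²} :
    PGinc x (PGpole s y) ↔ hermForm s y.rep x.rep = 0 := by
  rw [PGpole_eq, ← mk_rep x, PGinc_mk_mk_iff, mk_rep, dotProduct_comm]
  rfl

theorem mem_HermitianCurve_iff_PGinc_PGpole {s : ℕ} {x : ℙ²} :
    x ∈ HermitianCurve F s ↔ PGinc x (PGpole s x) := by
  rw [mem_HermitianCurve_iff, PGinc_PGpole_iff]

variable [Fintype F] {s : ℕ}

theorem hermForm_pow (hF : Fintype.card F = s * s) (v w : Fin 3 → F) :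
    hermForm s v w ^ s = hermForm s w v := by
  simp only [hermForm, Fin.sum_univ_three, add_pow_of_card_eq_mul_self hF, mul_pow,
    pow_pow_of_card_eq_mul_self hF, mul_comm]

theorem hermForm_smul_add_self (hF : Fintype.card F = s * s) (u : F) (a b : Fin 3 → F) :
    hermForm s (u • a + b) (u • a + b) = u ^ (s + 1) * hermForm s a a + u ^ s * hermForm s a b
      + u * hermForm s a b ^ s + hermForm s b b := by
  rw [hermForm_pow hF]
  simp only [hermForm, Fin.sum_univ_three, Pi.add_apply, Pi.smul_apply, smul_eq_mul,
    add_pow_of_card_eq_mul_self hF, mul_pow]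
  ring

theorem PGinc_PGpole_comm (hF : Fintype.card F = s * s) {x y : ℙ²} :
    PGinc x (PGpole s y) ↔ PGinc y (PGpole s x) := by
  rw [PGinc_PGpole_iff, PGinc_PGpole_iff, ← hermForm_pow hF,
    pow_eq_zero_iff (by have := two_le_of_card_eq_mul_self hF; omega)]

theorem PGpole_PGpole (hF : Fintype.card F = s * s) (x : ℙ²) : PGpole s (PGpole s x) = x := by
  conv_rhs => rw [← mk_rep x]
  rw [PGpole_eq s (PGpole s x), mk_eq_mk_iff']
  obtain ⟨a, ha⟩ := exists_smul_eq_mk_rep F _ (pow_rep_ne_zero s x)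
  refine ⟨(a : F) ^ s, funext fun i => ?_⟩
  rw [← PGpole_eq] at ha
  simp [← ha, Units.smul_def, mul_pow, pow_pow_of_card_eq_mul_self hF]

theorem PGpole_injective (hF : Fintype.card F = s * s) : Injective (PGpole s : ℙ² → ℙ²) :=
  LeftInverse.injective (PGpole_PGpole hF)

end UnitaryPolarity

section HermitianCurve

variable {F : Type*} [Field F] [Fintype F] {s : ℕ}

local notation "ℙ²" => Projectivization F (Fin 3 → F)

theorem sep_PGinc_PGpole_eq_singleton (hF : Fintype.card F = s * s) {z : ℙ²}
    (hz : z ∈ HermitianCurve F s) :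
    {y ∈ HermitianCurve F s | PGinc y (PGpole s z)} = {z} := by
  ext y
  constructor
  · rintro ⟨hy, hyz⟩
    rcases PGinc.eq_or_eq hyz (mem_HermitianCurve_iff_PGinc_PGpole.1 hz)
      (mem_HermitianCurve_iff_PGinc_PGpole.1 hy) ((PGinc_PGpole_comm hF).1 hyz) with h | h
    exacts [h, (PGpole_injective hF h).symm]
  · rintro rfl
    exact ⟨hz, mem_HermitianCurve_iff_PGinc_PGpole.1 hz⟩

theorem linePoint_mem_HermitianCurve_iff (hF : Fintype.card F = s * s) {x y : ℙ²} (hxy : x ≠ y)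
    (u : F) : linePoint hxy u ∈ HermitianCurve F s ↔
      u ^ (s + 1) * hermForm s x.rep x.rep + u ^ s * hermForm s x.rep y.rep
        + u * hermForm s x.rep y.rep ^ s + hermForm s y.rep y.rep = 0 := by
  rw [linePoint, mk_mem_HermitianCurve_iff, hermForm_smul_add_self hF]

theorem exists_mem_HermitianCurve_PGinc (hF : Fintype.card F = s * s) (ℓ : ℙ²) :
    ∃ z ∈ HermitianCurve F s, PGinc z ℓ := by
  obtain ⟨x, -, hx⟩ := exists_ne_PGinc ℓ ℓ
  by_cases hxH : x ∈ HermitianCurve F s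
  · exact ⟨x, hxH, hx⟩
  have hxx : ¬PGinc x (PGpole s x) := mt mem_HermitianCurve_iff_PGinc_PGpole.2 hxH
  obtain ⟨y, hyℓ, hyx⟩ := exists_PGinc_PGinc fun h : ℓ = PGpole s x => hxx (h ▸ hx)
  have hxy : x ≠ y := fun h => hxx (h ▸ hyx)
  have he : hermForm s x.rep x.rep ≠ 0 := mt mem_HermitianCurve_iff.2 hxH
  -- As `hermForm s x.rep y.rep = 0`, the point `⟨u x + y⟩` lies on `H` iff
  -- `u ^ (s + 1) = -hermForm s y.rep y.rep / hermForm s x.rep x.rep`.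
  obtain ⟨u, hu⟩ := exists_pow_succ_eq hF (r := -(hermForm s y.rep y.rep / hermForm s x.rep x.rep))
    (by rw [neg_pow_of_card_eq_mul_self hF, div_pow, hermForm_pow hF, hermForm_pow hF])
  refine ⟨linePoint hxy u, (linePoint_mem_HermitianCurve_iff hF hxy u).2 ?_,
    PGinc_linePoint hxy hx hyℓ u⟩
  rw [hu, PGinc_PGpole_iff.1 hyx, zero_pow (by have := two_le_of_card_eq_mul_self hF; omega)]
  field_simp
  ring

theorem exists_mem_HermitianCurve_PGinc_PGpole (hF : Fintype.card F = s * s) (x : ℙ²) :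
    ∃ z ∈ HermitianCurve F s, PGinc x (PGpole s z) := by
  obtain ⟨z, hz, hzx⟩ := exists_mem_HermitianCurve_PGinc hF (PGpole s x)
  exact ⟨z, hz, (PGinc_PGpole_comm hF).1 hzx⟩

theorem ncard_sep_PGinc_of_ne_PGpole (hF : Fintype.card F = s * s) {z ℓ : ℙ²}
    (hz : z ∈ HermitianCurve F s) (hzℓ : PGinc z ℓ) (hℓ : ℓ ≠ PGpole s z) :
    {y ∈ HermitianCurve F s | PGinc y ℓ}.ncard = s + 1 := by
  classical
  obtain ⟨y, hyz, hyℓ⟩ := exists_ne_PGinc z ℓ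
  have hzy : z ≠ y := hyz.symm
  set c := hermForm s z.rep y.rep
  have hc : c ≠ 0 := fun hc =>
    hℓ ((PGinc.eq_or_eq hzℓ hyℓ (mem_HermitianCurve_iff_PGinc_PGpole.1 hz)
      (PGinc_PGpole_iff.2 hc)).resolve_left hzy)
  have key : ∀ u, linePoint hzy u ∈ HermitianCurve F s ↔
      c * u ^ s + c ^ s * u + hermForm s y.rep y.rep = 0 := fun u => by
    rw [linePoint_mem_HermitianCurve_iff hF, mem_HermitianCurve_iff.1 hz, mul_zero, zero_add,
      mul_comm (u ^ s), mul_comm u]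
  have hset : {p ∈ HermitianCurve F s | PGinc p ℓ} = insert z
      (linePoint hzy '' {u | c * u ^ s + c ^ s * u + hermForm s y.rep y.rep = 0}) := by
    rw [← Set.inter_ofPred_eq_sep, setOf_PGinc_eq_insert_range hzy hzℓ hyℓ,
      Set.inter_insert_of_mem hz, Set.inter_comm, ← Set.image_univ, ← Set.image_inter_preimage,
      Set.univ_inter]
    exact congrArg _ (congrArg _ (Set.ext key))
  rw [hset, Set.ncard_insert_of_notMem, Set.ncard_image_of_injective _ (linePoint_injective hzy),
    Set.ncard_eq_toFinset_card', Set.toFinset_ofPred,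
    card_filter_mul_pow_add_pow_mul_add_eq hF hc (hermForm_pow hF _ _)]
  rintro ⟨u, -, hu⟩
  exact linePoint_ne_left hzy u hu

theorem ncard_HermitianCurve (hF : Fintype.card F = s * s) :
    (HermitianCurve F s).ncard = s * s * s + 1 := by
  obtain ⟨P, hP, -⟩ := exists_mem_HermitianCurve_PGinc hF (Classical.arbitrary ℙ²)
  -- Count `H \ {P}` along the `s * s` lines through `P` other than the tangent `P^⊥`.
  let T : Set ℙ² := {ℓ | PGinc ℓ P} \ {PGpole s P}
  have hT : T.ncard = s * s := by
    rw [Set.ncard_sdiff_singleton_of_mem (show PGpole s P ∈ {ℓ | PGinc ℓ P} from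
      PGinc_comm.1 (mem_HermitianCurve_iff_PGinc_PGpole.1 hP)), ncard_setOf_PGinc, hF,
      Nat.add_sub_cancel]
  have hcover : HermitianCurve F s \ {P} =
      ⋃ ℓ ∈ T, {y ∈ HermitianCurve F s | PGinc y ℓ} \ {P} := by
    ext y
    simp only [T, Set.mem_sdiff, Set.mem_singleton_iff, Set.mem_iUnion, exists_prop,
      Set.mem_ofPred_eq]
    refine ⟨fun ⟨hy, hyP⟩ => ?_, fun ⟨ℓ, _, ⟨hy, _⟩, hyP⟩ => ⟨hy, hyP⟩⟩
    obtain ⟨ℓ, hℓP, hℓy⟩ := exists_PGinc_PGinc (Ne.symm hyP)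
    refine ⟨ℓ, ⟨hℓP, fun hℓ => hyP ?_⟩, ⟨hy, PGinc_comm.1 hℓy⟩, hyP⟩
    rw [← Set.mem_singleton_iff, ← sep_PGinc_PGpole_eq_singleton hF hP, ← hℓ]
    exact ⟨hy, PGinc_comm.1 hℓy⟩
  have hdisj : T.PairwiseDisjoint fun ℓ => {y ∈ HermitianCurve F s | PGinc y ℓ} \ {P} := by
    intro ℓ hℓ m hm hℓm
    refine Set.disjoint_left.2 fun y ⟨⟨_, hyℓ⟩, hyP⟩ ⟨⟨_, hym⟩, _⟩ => hyP ?_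
    exact (PGinc.eq_or_eq hyℓ (PGinc_comm.1 hℓ.1) hym (PGinc_comm.1 hm.1)).resolve_right hℓm
  have hsize : ∀ ℓ ∈ T, ({y ∈ HermitianCurve F s | PGinc y ℓ} \ {P}).ncard = s := by
    rintro ℓ ⟨hℓP, hℓ⟩
    rw [Set.ncard_sdiff_singleton_of_mem (show P ∈ {y ∈ HermitianCurve F s | PGinc y ℓ} from
      ⟨hP, PGinc_comm.1 hℓP⟩), ncard_sep_PGinc_of_ne_PGpole hF hP (PGinc_comm.1 hℓP) hℓ,
      Nat.add_sub_cancel]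
  rw [← Set.ncard_sdiff_singleton_add_one hP, hcover,
    (Set.toFinite T).ncard_biUnion (fun _ _ => Set.toFinite _) hdisj, finsum_mem_congr rfl hsize,
    ← mul_one s, ← mul_finsum_mem, finsum_one, hT]
  ring

end HermitianCurve

section Petal

variable {F : Type*} [Field F] {s : ℕ}

local notation "ℙ²" => Projectivization F (Fin 3 → F)

def petal (s : ℕ) (ℓ : ℙ²) : Set ℙ² :=
  insert (PGpole s ℓ) {x | PGinc x ℓ ∧ x ∉ HermitianCurve F s}

theorem union_iUnion_petal {n : ℕ} (ι : Fin n → ℙ²) :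
    HermitianCurve F s ∪ (⋃ i, {x | PGinc x (ι i)}) ∪ Set.range (fun i => PGpole s (ι i)) =
      HermitianCurve F s ∪ ⋃ i, petal s (ι i) := by
  ext x
  simp only [petal, Set.mem_union, Set.mem_iUnion, Set.mem_range, Set.mem_insert_iff,
    Set.mem_ofPred_eq]
  by_cases hx : x ∈ HermitianCurve F s
  · simp only [hx, true_or]
  · simp only [hx, false_or, not_false_eq_true, and_true, eq_comm (a := x)]
    constructor
    · rintro (⟨i, hi⟩ | ⟨i, hi⟩) <;> exact ⟨i, by tauto⟩
    · rintro ⟨i, hi | hi⟩ <;> [right; left] <;> exact ⟨i, hi⟩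

variable [Fintype F]

theorem ne_PGpole_of_ncard_sep_PGinc (hF : Fintype.card F = s * s) {ℓ z : ℙ²}
    (hℓ : {y ∈ HermitianCurve F s | PGinc y ℓ}.ncard = s + 1) (hz : z ∈ HermitianCurve F s) :
    ℓ ≠ PGpole s z := by
  rintro rfl
  rw [sep_PGinc_PGpole_eq_singleton hF hz, Set.ncard_singleton] at hℓ
  have := two_le_of_card_eq_mul_self hF
  omega

theorem PGpole_notMem_HermitianCurve (hF : Fintype.card F = s * s) {ℓ : ℙ²}
    (hℓ : {y ∈ HermitianCurve F s | PGinc y ℓ}.ncard = s + 1) :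
    PGpole s ℓ ∉ HermitianCurve F s := fun h =>
  ne_PGpole_of_ncard_sep_PGinc hF hℓ h (PGpole_PGpole hF ℓ).symm

theorem disjoint_HermitianCurve_petal (hF : Fintype.card F = s * s) {ℓ : ℙ²}
    (hℓ : {y ∈ HermitianCurve F s | PGinc y ℓ}.ncard = s + 1) :
    Disjoint (HermitianCurve F s) (petal s ℓ) := by
  refine Set.disjoint_left.2 fun x hx hxℓ => ?_
  rcases hxℓ with rfl | ⟨-, hx'⟩
  exacts [PGpole_notMem_HermitianCurve hF hℓ hx, hx' hx]

theorem ncard_petal (hF : Fintype.card F = s * s) {ℓ : ℙ²}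
    (hℓ : {y ∈ HermitianCurve F s | PGinc y ℓ}.ncard = s + 1) :
    (petal s ℓ).ncard = s * s - s + 1 := by
  have hoff : {x | PGinc x ℓ ∧ x ∉ HermitianCurve F s} =
      {x | PGinc x ℓ} \ {y ∈ HermitianCurve F s | PGinc y ℓ} := by
    ext x
    simp only [Set.mem_ofPred_eq, Set.mem_sdiff]
    tauto
  have hpole : PGpole s ℓ ∉ {x | PGinc x ℓ ∧ x ∉ HermitianCurve F s} := fun h =>
    h.2 (mem_HermitianCurve_iff_PGinc_PGpole.2 (by rw [PGpole_PGpole hF]; exact h.1))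
  rw [petal, Set.ncard_insert_of_notMem hpole, hoff, Set.ncard_sdiff (fun _ h => h.2),
    ncard_setOf_PGinc, hℓ, hF]
  omega

/-- The meeting point is the pole `ℓ^⊥` if `z ∈ ℓ`, and the point `ℓ ∩ z^⊥ ∉ H` otherwise. -/
theorem ncard_petal_inter_PGpole (hF : Fintype.card F = s * s) {ℓ z : ℙ²}
    (hℓ : {y ∈ HermitianCurve F s | PGinc y ℓ}.ncard = s + 1) (hz : z ∈ HermitianCurve F s) :
    (petal s ℓ ∩ {x | PGinc x (PGpole s z)}).ncard = 1 := by
  have hℓz := ne_PGpole_of_ncard_sep_PGinc hF hℓ hz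
  have hpole : PGinc (PGpole s ℓ) (PGpole s z) ↔ PGinc z ℓ := by
    rw [PGinc_PGpole_comm hF, PGpole_PGpole hF]
  obtain ⟨p, hpℓ, hpz⟩ := exists_PGinc_PGinc hℓz
  have meet : ∀ x, PGinc x ℓ → PGinc x (PGpole s z) → x = p := fun x hxℓ hxz =>
    (PGinc.eq_or_eq hxℓ hpℓ hxz hpz).resolve_right hℓz
  rw [Set.ncard_eq_one]
  by_cases hpH : p ∈ HermitianCurve F s
  · have hpz : p = z := by
      rw [← Set.mem_singleton_iff, ← sep_PGinc_PGpole_eq_singleton hF hz]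
      exact ⟨hpH, hpz⟩
    subst hpz
    refine ⟨PGpole s ℓ, Set.eq_singleton_iff_unique_mem.2 ⟨⟨Set.mem_insert _ _, hpole.2 hpℓ⟩, ?_⟩⟩
    rintro x ⟨rfl | ⟨hxℓ, hxH⟩, hxz⟩
    exacts [rfl, absurd (meet x hxℓ hxz ▸ hpH) hxH]
  · refine ⟨p, Set.eq_singleton_iff_unique_mem.2 ⟨⟨Or.inr ⟨hpℓ, hpH⟩, hpz⟩, ?_⟩⟩
    rintro x ⟨rfl | ⟨hxℓ, -⟩, hxz⟩
    · exact absurd (meet z (hpole.1 hxz) (mem_HermitianCurve_iff_PGinc_PGpole.1 hz) ▸ hz) hpH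
    · exact meet x hxℓ hxz

/-- Secants through `P ∈ H` meet the tangent `P^⊥` only at `P`, while their poles lie on `P^⊥`. -/
theorem disjoint_petal (hF : Fintype.card F = s * s) {P ℓ m : ℙ²} (hP : P ∈ HermitianCurve F s)
    (hPℓ : PGinc P ℓ) (hPm : PGinc P m)
    (hℓ : {y ∈ HermitianCurve F s | PGinc y ℓ}.ncard = s + 1)
    (hm : {y ∈ HermitianCurve F s | PGinc y m}.ncard = s + 1) (hℓm : ℓ ≠ m) :
    Disjoint (petal s ℓ) (petal s m) := by
  have pole_off : ∀ {a b : ℙ²}, PGinc P a → PGinc P b →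
      {y ∈ HermitianCurve F s | PGinc y a}.ncard = s + 1 →
      {y ∈ HermitianCurve F s | PGinc y b}.ncard = s + 1 → ¬PGinc (PGpole s b) a := by
    intro a b hPa hPb ha hb hba
    have hbP : PGinc (PGpole s b) (PGpole s P) := by rwa [PGinc_PGpole_comm hF, PGpole_PGpole hF]
    rcases PGinc.eq_or_eq hba hPa hbP (mem_HermitianCurve_iff_PGinc_PGpole.1 hP) with h | h
    · exact PGpole_notMem_HermitianCurve hF hb (h ▸ hP)
    · exact ne_PGpole_of_ncard_sep_PGinc hF ha hP h
  refine Set.disjoint_left.2 fun x hxℓ hxm => ?_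
  rcases hxℓ with rfl | ⟨hxℓ, hxH⟩ <;> rcases hxm with hx | ⟨hxm, -⟩
  · exact hℓm (PGpole_injective hF hx)
  · exact pole_off hPm hPℓ hm hℓ hxm
  · exact pole_off hPℓ hPm hℓ hm (hx ▸ hxℓ)
  · exact hxH ((PGinc.eq_or_eq hxℓ hPℓ hxm hPm).resolve_right hℓm ▸ hP)

end Petal

theorem minimal_t_fold_blocking_set_construction_general (F : Type*) [Field F] [Fintype F]
    (q t : ℕ) (hq : Fintype.card F = q) (hsq : Nat.sqrt q * Nat.sqrt q = q)
    (ht : 1 ≤ t) (hts : t ≤ Nat.sqrt q + 1)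
    (P : Projectivization F (Fin 3 → F)) (hP : P ∈ HermitianCurve F (Nat.sqrt q))
    (ι : Fin (t - 1) → Projectivization F (Fin 3 → F)) (hinj : Function.Injective ι)
    (hιP : ∀ i, PGinc P (ι i))
    (hsec : ∀ i, {y ∈ HermitianCurve F (Nat.sqrt q) | PGinc y (ι i)}.ncard = Nat.sqrt q + 1) :
    (HermitianCurve F (Nat.sqrt q) ∪ (⋃ i, {x | PGinc x (ι i)}) ∪
        Set.range (fun i => PGpole (Nat.sqrt q) (ι i))).ncard
      = q * Nat.sqrt q + 1 + (t - 1) * (q - Nat.sqrt q + 1) ∧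
    (∀ ℓ : Projectivization F (Fin 3 → F),
        t ≤ {x ∈ HermitianCurve F (Nat.sqrt q) ∪ (⋃ i, {x | PGinc x (ι i)}) ∪
            Set.range (fun i => PGpole (Nat.sqrt q) (ι i)) | PGinc x ℓ}.ncard) ∧
    (∀ x ∈ HermitianCurve F (Nat.sqrt q) ∪ (⋃ i, {x | PGinc x (ι i)}) ∪
        Set.range (fun i => PGpole (Nat.sqrt q) (ι i)),
        ∃ ℓ : Projectivization F (Fin 3 → F), PGinc x ℓ ∧
          {y ∈ HermitianCurve F (Nat.sqrt q) ∪ (⋃ i, {x | PGinc x (ι i)}) ∪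
              Set.range (fun i => PGpole (Nat.sqrt q) (ι i)) | PGinc y ℓ}.ncard = t) := by
  subst hq
  set s := Nat.sqrt (Fintype.card F)
  have hF : Fintype.card F = s * s := hsq.symm
  rw [union_iUnion_petal]
  have hdisjH i := disjoint_HermitianCurve_petal hF (hsec i)
  have hdisj : Pairwise (Disjoint on fun i => petal s (ι i)) := fun i j hij =>
    disjoint_petal hF hP (hιP i) (hιP j) (hsec i) (hsec j) (hinj.ne hij)
  have ncard_tangent : ∀ z ∈ HermitianCurve F s,
      {x ∈ HermitianCurve F s ∪ ⋃ i, petal s (ι i) | PGinc x (PGpole s z)}.ncard = t := by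
    intro z hz
    rw [← Set.inter_ofPred_eq_sep, Set.ncard_union_iUnion_inter hdisjH hdisj,
      Set.inter_ofPred_eq_sep, sep_PGinc_PGpole_eq_singleton hF hz, Set.ncard_singleton]
    simp only [ncard_petal_inter_PGpole hF (hsec _) hz, Finset.sum_const, Finset.card_univ,
      Fintype.card_fin, smul_eq_mul, mul_one]
    omega
  refine ⟨?_, fun ℓ => ?_, fun x _ => ?_⟩
  · rw [← Set.inter_univ (_ ∪ _), Set.ncard_union_iUnion_inter hdisjH hdisj]
    simp only [Set.inter_univ, ncard_HermitianCurve hF, ncard_petal hF (hsec _), Finset.sum_const,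
      Finset.card_univ, Fintype.card_fin, smul_eq_mul, hF]
  · obtain ⟨z, hz, hzℓ⟩ := exists_mem_HermitianCurve_PGinc hF ℓ
    by_cases hℓ : ℓ = PGpole s z
    · exact hℓ ▸ (ncard_tangent z hz).ge
    · calc t ≤ {y ∈ HermitianCurve F s | PGinc y ℓ}.ncard := by
            rw [ncard_sep_PGinc_of_ne_PGpole hF hz hzℓ hℓ]; exact hts
        _ ≤ _ := Set.ncard_le_ncard (Set.inter_subset_inter_left _ Set.subset_union_left)
  · obtain ⟨z, hz, hxz⟩ := exists_mem_HermitianCurve_PGinc_PGpole hF x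
    exact ⟨PGpole s z, hxz, ncard_tangent z hz⟩

theorem minimal_t_fold_blocking_set_construction (F : Type*) [Field F] [Fintype F]
    (q t : ℕ) (hq : Fintype.card F = q) (hsq : Nat.sqrt q * Nat.sqrt q = q)
    (hq1 : IsPrimePow q) (ht : 1 ≤ t) (hts : t ≤ Nat.sqrt q + 1)
    (P : Projectivization F (Fin 3 → F)) (hP : P ∈ HermitianCurve F (Nat.sqrt q))
    (L : Projectivization F (Fin 3 → F)) (hPL : PGinc P L)
    (htangent : {y ∈ HermitianCurve F (Nat.sqrt q) | PGinc y L}.ncard = 1)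
    (ι : Fin (t - 1) → Projectivization F (Fin 3 → F)) (hinj : Function.Injective ι)
    (hιP : ∀ i, PGinc P (ι i)) (hιL : ∀ i, ι i ≠ L)
    (hsec : ∀ i, {y ∈ HermitianCurve F (Nat.sqrt q) | PGinc y (ι i)}.ncard = Nat.sqrt q + 1) :
    (HermitianCurve F (Nat.sqrt q) ∪ (⋃ i, {x | PGinc x (ι i)}) ∪
        Set.range (fun i => PGpole (Nat.sqrt q) (ι i))).ncard
      = q * Nat.sqrt q + 1 + (t - 1) * (q - Nat.sqrt q + 1) ∧
    (∀ ℓ : Projectivization F (Fin 3 → F),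
        t ≤ {x ∈ HermitianCurve F (Nat.sqrt q) ∪ (⋃ i, {x | PGinc x (ι i)}) ∪
            Set.range (fun i => PGpole (Nat.sqrt q) (ι i)) | PGinc x ℓ}.ncard) ∧
    (∀ x ∈ HermitianCurve F (Nat.sqrt q) ∪ (⋃ i, {x | PGinc x (ι i)}) ∪
        Set.range (fun i => PGpole (Nat.sqrt q) (ι i)),
        ∃ ℓ : Projectivization F (Fin 3 → F), PGinc x ℓ ∧
          {y ∈ HermitianCurve F (Nat.sqrt q) ∪ (⋃ i, {x | PGinc x (ι i)}) ∪
              Set.range (fun i => PGpole (Nat.sqrt q) (ι i)) | PGinc y ℓ}.ncard = t) :=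
  minimal_t_fold_blocking_set_construction_general F q t hq hsq ht hts P hP ι hinj hιP hsec
end

section
/- Let S be a set of points in a finite projective plane of order n such that through each point of S there are at least s lines meeting S in exactly t points (s, t ≥ 1, st ≤ n). Then s|S|² − (2st(n+1) − (s+t)n)|S| − t(n − st)(n² + n + 1) ≤ 0; in particular |S| is at most the larger root of s·x² − (2st(n+1) − (s+t)n)·x − t(n − st)(n²+n+1) = 0. -/
/-!
Each point of `S` picks `s` of its `t`-secants, and `m ℓ` counts the points that picked `ℓ`; thus
`∑ m = s|S|`, `m ℓ ≤ t`, and `m` vanishes off the `t`-secants. The weight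
`w x = ∑_{ℓ ∋ x} m ℓ` then has `∑_S w = t s|S|` and `∑ w = (n+1) s|S|`, and since two distinct
lines meet in exactly one point, `∑ w² = (∑ m)² + n ∑ m² ≤ (s|S|)² + n t s|S|`. Cauchy–Schwarz
on `S` and on its complement, divided by `s|S|²`, is the quadratic inequality.
-/

open Configuration Finset

theorem le_larger_root_of_quadratic_nonpos {a b c x : ℝ} (ha : 0 < a)
    (h : a * x ^ 2 - b * x - c ≤ 0) : x ≤ (b + √(b ^ 2 + 4 * a * c)) / (2 * a) := by
  have hsq : (2 * a * x - b) ^ 2 ≤ b ^ 2 + 4 * a * c := by nlinarith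
  rw [le_div_iff₀ (by positivity)]
  linarith [Real.le_sqrt_of_sq_le hsq]

theorem sq_sum_add_sq_sum_compl_le {P : Type*} [Fintype P] [DecidableEq P] (S : Finset P)
    (w : P → ℝ) :
    (Fintype.card P - #S) * (∑ x ∈ S, w x) ^ 2 + #S * (∑ x ∈ Sᶜ, w x) ^ 2
      ≤ #S * (Fintype.card P - #S) * ∑ x, w x ^ 2 := by
  have hS := sq_sum_le_card_mul_sum_sq (s := S) (f := w)
  have hSc := sq_sum_le_card_mul_sum_sq (s := Sᶜ) (f := w)
  have hk : (#S : ℝ) ≤ Fintype.card P := mod_cast card_le_univ S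
  rw [card_compl, Nat.cast_sub (card_le_univ S)] at hSc
  rw [← sum_add_sum_compl S (fun x => w x ^ 2)]
  nlinarith [mul_le_mul_of_nonneg_left hS (sub_nonneg.2 hk),
    mul_le_mul_of_nonneg_left hSc (#S).cast_nonneg]

section Incidence

variable {P L : Type*} [Membership P L] [Fintype L] [DecidableRel (α := P) (β := L) (· ∈ ·)]

def coverage (m : L → ℝ) (x : P) : ℝ := ∑ ℓ with x ∈ ℓ, m ℓ

theorem sum_coverage (m : L → ℝ) (A : Finset P) :
    ∑ x ∈ A, coverage m x = ∑ ℓ, m ℓ * #{x ∈ A | x ∈ ℓ} := by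
  simp only [coverage, sum_filter]
  rw [sum_comm]
  refine sum_congr rfl fun ℓ _ => ?_
  rw [← sum_filter, sum_const, nsmul_eq_mul, mul_comm]

theorem sum_coverage_sq [Fintype P] (m : L → ℝ) :
    ∑ x : P, coverage m x ^ 2 = ∑ ℓ, ∑ ℓ', m ℓ * m ℓ' * #{x : P | x ∈ ℓ ∧ x ∈ ℓ'} := by
  simp only [coverage, sq, sum_mul_sum, sum_filter, ite_mul, mul_ite, mul_zero, zero_mul]
  rw [sum_comm]
  refine sum_congr rfl fun ℓ _ => ?_
  rw [sum_comm]
  refine sum_congr rfl fun ℓ' _ => ?_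
  rw [card_filter, Nat.cast_sum, mul_sum]
  refine sum_congr rfl fun x _ => ?_
  by_cases h : x ∈ ℓ <;> by_cases h' : x ∈ ℓ' <;> simp [h, h']

end Incidence

theorem exists_secant_weights {P L : Type*} [Membership P L] [Fintype L]
    [DecidableRel (α := P) (β := L) (· ∈ ·)] (S : Finset P) {s t : ℕ}
    (hS : ∀ p ∈ S, s ≤ #{ℓ : L | p ∈ ℓ ∧ #{q ∈ S | q ∈ ℓ} = t}) :
    ∃ m : L → ℕ, ∑ ℓ, m ℓ = s * #S ∧ ∀ ℓ, m ℓ ≠ 0 → #{q ∈ S | q ∈ ℓ} = t ∧ m ℓ ≤ t := by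
  have hB : ∀ p, ∃ B : Finset L,
      p ∈ S → B ⊆ ({ℓ | p ∈ ℓ ∧ #{q ∈ S | q ∈ ℓ} = t} : Finset L) ∧ #B = s := by
    intro p
    by_cases hp : p ∈ S
    · obtain ⟨B, hB, hBs⟩ := exists_subset_card_eq (hS p hp)
      exact ⟨B, fun _ => ⟨hB, hBs⟩⟩
    · exact ⟨∅, fun h => absurd h hp⟩
  choose B hB using hB
  classical
  have hsecant {p ℓ} (hp : p ∈ S) (hℓ : ℓ ∈ B p) : p ∈ ℓ ∧ #{q ∈ S | q ∈ ℓ} = t := by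
    simpa using (hB p hp).1 hℓ
  refine ⟨fun ℓ => #{p ∈ S | ℓ ∈ B p}, ?_, fun ℓ hℓ => ?_⟩
  · calc ∑ ℓ, #{p ∈ S | ℓ ∈ B p} = ∑ p ∈ S, #(B p) := by
          simp_rw [card_filter]
          rw [sum_comm]
          simp
      _ = s * #S := by rw [sum_congr rfl fun p hp => (hB p hp).2, sum_const, smul_eq_mul, mul_comm]
  · obtain ⟨p, hp⟩ := card_ne_zero.1 hℓ
    rw [mem_filter] at hp
    have ht := (hsecant hp.1 hp.2).2
    refine ⟨ht, ht ▸ card_le_card fun q hq => ?_⟩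
    rw [mem_filter] at hq ⊢
    exact ⟨hq.1, (hsecant hq.1 hq.2).1⟩

section ProjectivePlane

variable {P L : Type*} [Membership P L] [Fintype P] [Fintype L] [ProjectivePlane P L]
  [DecidableRel (α := P) (β := L) (· ∈ ·)]

theorem card_filter_mem_eq_order_add_one (ℓ : L) :
    #{x : P | x ∈ ℓ} = ProjectivePlane.order P L + 1 := by
  rw [← ProjectivePlane.pointCount_eq P ℓ, pointCount, Nat.card_eq_fintype_card,
    Fintype.card_subtype]

theorem card_filter_mem_mem [DecidableEq L] (ℓ ℓ' : L) :
    #{x : P | x ∈ ℓ ∧ x ∈ ℓ'} = if ℓ = ℓ' then ProjectivePlane.order P L + 1 else 1 := by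
  split_ifs with h
  · subst h
    simpa using card_filter_mem_eq_order_add_one (P := P) ℓ
  · obtain ⟨x, hx, hunique⟩ := HasPoints.existsUnique_point P L ℓ ℓ' h
    rw [card_eq_one]
    exact ⟨x, by ext y; simpa using ⟨hunique y, fun hy => hy ▸ hx⟩⟩

theorem sum_coverage_sq_eq (m : L → ℝ) :
    ∑ x : P, coverage m x ^ 2 = (∑ ℓ, m ℓ) ^ 2 + ProjectivePlane.order P L * ∑ ℓ, m ℓ ^ 2 := by
  classical
  have hsplit (ℓ ℓ' : L) : m ℓ * m ℓ' * #{x : P | x ∈ ℓ ∧ x ∈ ℓ'}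
      = m ℓ * m ℓ' + ProjectivePlane.order P L * if ℓ = ℓ' then m ℓ * m ℓ' else 0 := by
    rw [card_filter_mem_mem]
    split_ifs <;> push_cast <;> ring
  simp_rw [sum_coverage_sq, hsplit, sum_add_distrib, ← mul_sum, sum_ite_eq, sq, sum_mul_sum]
  simp only [mem_univ, if_true, mul_sum]

theorem weighted_incidence_bound [DecidableEq P] (m : L → ℝ) (S : Finset P) :
    (Fintype.card P - #S) * (∑ ℓ, m ℓ * #{x ∈ S | x ∈ ℓ}) ^ 2
      + #S * ((ProjectivePlane.order P L + 1) * ∑ ℓ, m ℓ - ∑ ℓ, m ℓ * #{x ∈ S | x ∈ ℓ}) ^ 2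
      ≤ #S * (Fintype.card P - #S)
        * ((∑ ℓ, m ℓ) ^ 2 + ProjectivePlane.order P L * ∑ ℓ, m ℓ ^ 2) := by
  have hcompl : ∑ x ∈ Sᶜ, coverage m x
      = (ProjectivePlane.order P L + 1) * ∑ ℓ, m ℓ - ∑ ℓ, m ℓ * #{x ∈ S | x ∈ ℓ} := by
    rw [eq_sub_iff_add_eq, ← sum_coverage, sum_compl_add_sum, sum_coverage, mul_sum]
    refine sum_congr rfl fun ℓ _ => ?_
    rw [card_filter_mem_eq_order_add_one]
    push_cast
    ring
  have h := sq_sum_add_sq_sum_compl_le S (coverage m)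
  rwa [sum_coverage, hcompl, sum_coverage_sq_eq] at h

theorem secant_quadratic_nonpos {n s t : ℕ} (hn : ProjectivePlane.order P L = n) (hs : 0 < s)
    (hst : s * t ≤ n) (S : Finset P)
    (hS : ∀ p ∈ S, s ≤ #{ℓ : L | p ∈ ℓ ∧ #{q ∈ S | q ∈ ℓ} = t}) :
    s * (#S : ℝ) ^ 2 - (2 * s * t * (n + 1) - (s + t) * n) * #S
      - t * (n - s * t) * (n ^ 2 + n + 1) ≤ 0 := by
  classical
  have hstR : (s : ℝ) * t ≤ n := mod_cast hst
  obtain rfl | hne := S.eq_empty_or_nonempty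
  · have hc : 0 ≤ (t : ℝ) * (n - s * t) * (n ^ 2 + n + 1) :=
      mul_nonneg (mul_nonneg t.cast_nonneg (sub_nonneg.2 hstR)) (by positivity)
    simpa using hc
  obtain ⟨m, hsum, hsecant⟩ := exists_secant_weights S hS
  have hM : ∑ ℓ, (m ℓ : ℝ) = s * #S := mod_cast hsum
  have hI : ∑ ℓ, (m ℓ : ℝ) * #{x ∈ S | x ∈ ℓ} = t * (s * #S) := by
    rw [← hM, mul_sum]
    refine sum_congr rfl fun ℓ _ => ?_
    by_cases h : m ℓ = 0
    · simp [h]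
    · rw [(hsecant ℓ h).1, mul_comm]
  have hQ : ∑ ℓ, (m ℓ : ℝ) ^ 2 ≤ t * (s * #S) := by
    rw [← hM, mul_sum]
    refine sum_le_sum fun ℓ _ => ?_
    by_cases h : m ℓ = 0
    · simp [h]
    · rw [sq]
      exact mul_le_mul_of_nonneg_right (mod_cast (hsecant ℓ h).2) (m ℓ).cast_nonneg
  have hbound := weighted_incidence_bound (fun ℓ => (m ℓ : ℝ)) S
  rw [hM, hI, ProjectivePlane.card_points P L, hn] at hbound
  push_cast at hbound
  -- makes the coefficient of `hQ` below nonnegative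
  have hkN : (#S : ℝ) ≤ n ^ 2 + n + 1 := by
    have := card_le_univ S
    rw [ProjectivePlane.card_points P L, hn] at this
    exact_mod_cast this
  refine nonpos_of_mul_nonpos_left (b := s * (#S : ℝ) ^ 2) ?_ (by positivity)
  linear_combination hbound + (#S * (n ^ 2 + n + 1 - #S) * n) * hQ

end ProjectivePlane

theorem s_fold_t_secant_bound_general (P L : Type*) [Membership P L]
    [Fintype P] [Fintype L] [ProjectivePlane P L]
    (n s t : ℕ) (hn : ProjectivePlane.order P L = n) (hs : 1 ≤ s)
    (hst : s * t ≤ n)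
    (S : Finset P)
    (hS : ∀ p ∈ S, s ≤ Nat.card {ℓ : L // p ∈ ℓ ∧ Nat.card {q : P // q ∈ S ∧ q ∈ ℓ} = t}) :
    (s : ℝ) * (S.card : ℝ) ^ 2
        - (2 * s * t * ((n : ℝ) + 1) - ((s : ℝ) + t) * n) * S.card
        - t * ((n : ℝ) - s * t) * ((n : ℝ) ^ 2 + n + 1) ≤ 0 ∧
    (S.card : ℝ) ≤ ((2 * s * t * ((n : ℝ) + 1) - ((s : ℝ) + t) * n)
        + Real.sqrt ((2 * s * t * ((n : ℝ) + 1) - ((s : ℝ) + t) * n) ^ 2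
            + 4 * s * (t * ((n : ℝ) - s * t) * ((n : ℝ) ^ 2 + n + 1)))) / (2 * s) := by
  classical
  have hS' : ∀ p ∈ S, s ≤ #{ℓ : L | p ∈ ℓ ∧ #{q ∈ S | q ∈ ℓ} = t} := by
    simpa only [Nat.card_eq_fintype_card, Fintype.card_subtype, ← filter_filter, filter_univ_mem]
      using hS
  have hquad := secant_quadratic_nonpos hn hs hst S hS'
  exact ⟨hquad, le_larger_root_of_quadratic_nonpos (by positivity) (by linarith)⟩

theorem s_fold_t_secant_bound (P L : Type*) [Membership P L]
    [Fintype P] [Fintype L] [ProjectivePlane P L]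
    (n s t : ℕ) (hn : ProjectivePlane.order P L = n) (hs : 1 ≤ s) (ht : 1 ≤ t)
    (hst : s * t ≤ n)
    (S : Finset P)
    (hS : ∀ p ∈ S, s ≤ Nat.card {ℓ : L // p ∈ ℓ ∧ Nat.card {q : P // q ∈ S ∧ q ∈ ℓ} = t}) :
    (s : ℝ) * (S.card : ℝ) ^ 2
        - (2 * s * t * ((n : ℝ) + 1) - ((s : ℝ) + t) * n) * S.card
        - t * ((n : ℝ) - s * t) * ((n : ℝ) ^ 2 + n + 1) ≤ 0 ∧
    (S.card : ℝ) ≤ ((2 * s * t * ((n : ℝ) + 1) - ((s : ℝ) + t) * n)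
        + Real.sqrt ((2 * s * t * ((n : ℝ) + 1) - ((s : ℝ) + t) * n) ^ 2
            + 4 * s * (t * ((n : ℝ) - s * t) * ((n : ℝ) ^ 2 + n + 1)))) / (2 * s) :=
  s_fold_t_secant_bound_general P L n s t hn hs hst S hS
end
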